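/- arXiv:math/0602037 — 5 statements merged into one kernel-verified Lean document; each statement's English description precedes it below -/
import Mathlib

section
/- For every m ≥ 1, let ℤ_{N^(m)} be a cyclic group with N^(m) ≥ m, let A^(m) ⊆ ℤ_{N^(m)}, let L^(m) ≥ 1 be the integer part of N^(m)/m, and let P^(m) be the probability measure on (Ω, B_max) obtained as the pushforward of the uniform distribution on ℤ_{N^(m)} × {1,…,L^(m)} under the map (x, λ) ↦ { n ∈ ℤ : x + nλ ∈ A^(m) }. Then there exists a strictly increasing sequence m_1 < m_2 < … of positive integers and a probability measure P^(∞) on (Ω, B_max) such that: (weak convergence) lim_{i→∞} P^(m_i)(E) = P^(∞)(E) for every regular event E ∈ B_reg; and (shift invariance) P^(∞)(T^n E) = P^(∞)(E) for every E ∈ B_max and every n ∈ ℤ. -/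
open MeasureTheory Filter MeasurableSpace
open scoped ENNReal

/-- A point of the Furstenberg universal space `Ω = 2^ℤ`: a subset of the integers. -/
structure FurstPoint where
  carrier : Set ℤ

/-- The generating events `A_n = {B : n ∈ B}`. -/
def furstEvent (n : ℤ) : Set FurstPoint := {B | n ∈ B.carrier}

/-- The universal σ-algebra `B_max`, generated by the events `A_n`. -/
instance : MeasurableSpace FurstPoint :=
  MeasurableSpace.generateFrom (Set.range furstEvent)

/-- The regular algebra `B_reg`: events generated by finitely many of the `A_n`. -/
def furstReg : Set (Set FurstPoint) :=
  {E | ∃ s : Finset ℤ, MeasurableSet[MeasurableSpace.generateFrom (furstEvent '' s)] E}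

/-- The shift `T^n` on points: `B ↦ B + n`. -/
def furstShift (n : ℤ) (B : FurstPoint) : FurstPoint := ⟨(· + n) '' B.carrier⟩

/-- The measure `P^(m)`: the pushforward of the uniform distribution on
`ℤ_{N(m)} × [L(m)]` (with `L(m) = ⌊N(m)/m⌋`) under `(x, λ) ↦ {n : ℤ | x + nλ ∈ A(m)}`,
written as an average of Dirac measures. -/
noncomputable def furstMeasure (N : ℕ → ℕ) (A : (m : ℕ) → Set (ZMod (N m))) (m : ℕ) :
    Measure FurstPoint :=
  ((N m : ℝ≥0∞) * (N m / m : ℕ))⁻¹ •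
    ∑ p : Fin (N m) × Fin (N m / m),
      Measure.dirac
        ⟨{n : ℤ | ((p.1 : ℕ) : ZMod (N m)) + (n : ZMod (N m)) * (((p.2 : ℕ) + 1 : ℕ) : ZMod (N m))
            ∈ A m}⟩

/-! ### Auxiliary material: the Cantor cube `ℤ → Bool` -/

open Set Topology

/-- The (compact, metrizable) Cantor cube `2^ℤ`, as a product of discrete spaces. -/
abbrev FXX := ℤ → Bool

/-- The (countable) collection of measurable cylinders of the Cantor cube. -/
abbrev mcB : Set (Set FXX) := measurableCylinders (fun _ : ℤ => Bool)

/-- Identification of `FurstPoint` with the Cantor cube (forward direction). -/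
noncomputable def eF (B : FurstPoint) : FXX :=
  fun n => @decide (n ∈ B.carrier) (Classical.propDecidable _)

/-- Identification of `FurstPoint` with the Cantor cube (backward direction). -/
def eFinv (f : FXX) : FurstPoint := ⟨{n | f n = true}⟩

@[simp] lemma eFinv_eF (B : FurstPoint) : eFinv (eF B) = B := by
  cases B with
  | mk S => simp [eFinv, eF]

@[simp] lemma eF_eFinv (f : FXX) : eF (eFinv f) = f := by
  funext n
  simp [eFinv, eF]
  exact Bool.eq_iff_iff.mpr (@decide_eq_true_iff _ (Classical.propDecidable _))

lemma measurable_eF : Measurable eF := by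
  refine measurable_pi_iff.mpr fun n => ?_
  refine measurable_to_countable' fun b => ?_
  cases b
  · have : (fun B => eF B n) ⁻¹' {false} = (furstEvent n)ᶜ := by
      ext B; simp [eF, furstEvent]
    rw [this]
    exact (measurableSet_generateFrom (mem_range_self n)).compl
  · have : (fun B => eF B n) ⁻¹' {true} = furstEvent n := by
      ext B; simp [eF, furstEvent]
    rw [this]
    exact measurableSet_generateFrom (mem_range_self n)

lemma measurable_eFinv : Measurable eFinv := by
  refine measurable_generateFrom fun t ht => ?_
  obtain ⟨n, rfl⟩ := ht
  have : eFinv ⁻¹' furstEvent n = (fun f : FXX => f n) ⁻¹' {true} := by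
    ext f; simp [eFinv, furstEvent]
  rw [this]
  exact measurable_pi_apply n (measurableSet_singleton true)

lemma countable_mc : (mcB).Countable := by
  have : mcB = ⋃ (s : Finset ℤ) (S : Set ((i : s) → Bool)) (_ : MeasurableSet S),
      {cylinder s S} := rfl
  rw [this]
  exact Set.countable_iUnion fun s => Set.countable_iUnion fun S =>
    Set.countable_iUnion fun _ => Set.countable_singleton _

lemma isClopen_of_mem_mc {S : Set FXX} (hS : S ∈ mcB) : IsClosed S ∧ IsOpen S := by
  obtain ⟨s, F, -, rfl⟩ := (mem_measurableCylinders S).mp hS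
  have hcont : Continuous (fun f : FXX => (s.restrict f : (i : s) → Bool)) :=
    continuous_pi fun i => continuous_apply _
  exact ⟨(isClosed_discrete F).preimage hcont, (isOpen_discrete F).preimage hcont⟩

open Classical in
/-- **Helly-type selection via Carathéodory extension**: any sequence of probability
measures on the Cantor cube has a subsequence converging on all measurable cylinders
to a probability measure. -/
theorem exists_subseq_limit_measure (ν : ℕ → Measure FXX)
    (hν : ∀ i, IsProbabilityMeasure (ν i)) :
    ∃ ψ : ℕ → ℕ, StrictMono ψ ∧ ∃ νinf : Measure FXX, IsProbabilityMeasure νinf ∧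
      ∀ S ∈ mcB, Tendsto (fun i => ν (ψ i) S) atTop (𝓝 (νinf S)) := by
  -- enumerate the countable set of cylinders
  obtain ⟨Enum, hEnum⟩ : ∃ Enum : ℕ → Set FXX, mcB = Set.range Enum :=
    Set.Countable.exists_eq_range countable_mc ⟨∅, empty_mem_measurableCylinders _⟩
  -- diagonal subsequence, via sequential compactness of `ℕ → ℝ≥0∞`
  obtain ⟨l, -, ψ, hψ, hlim⟩ :=
    IsCompact.tendsto_subseq (isCompact_univ : IsCompact (univ : Set (ℕ → ℝ≥0∞)))
      (fun i => Set.mem_univ (fun k => ν i (Enum k)))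
  have hk : ∀ k, Tendsto (fun i => ν (ψ i) (Enum k)) atTop (𝓝 (l k)) := fun k =>
    (tendsto_pi_nhds.mp hlim) k
  -- the limit functional
  set Λ : Set FXX → ℝ≥0∞ := fun S => liminf (fun i => ν (ψ i) S) atTop with hΛdef
  have hΛ : ∀ S ∈ mcB, Tendsto (fun i => ν (ψ i) S) atTop (𝓝 (Λ S)) := by
    intro S hS
    rw [hEnum] at hS
    obtain ⟨k, rfl⟩ := hS
    have := hk k
    rw [hΛdef]
    simp only [this.liminf_eq]
    exact this
  have hΛuniv : Λ univ = 1 := by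
    have h1 : Tendsto (fun i => ν (ψ i) univ) atTop (𝓝 (Λ univ)) :=
      hΛ univ (univ_mem_measurableCylinders _)
    have h2 : Tendsto (fun i => ν (ψ i) univ) atTop (𝓝 1) := by
      have : (fun i => ν (ψ i) univ) = fun _ => 1 := by
        funext i; exact measure_univ
      rw [this]; exact tendsto_const_nhds
    exact tendsto_nhds_unique h1 h2
  -- finite additivity
  have hadd : ∀ S ∈ mcB, ∀ T ∈ mcB, Disjoint S T → Λ (S ∪ T) = Λ S + Λ T := by
    intro S hS T hT hd
    have h1 : Tendsto (fun i => ν (ψ i) (S ∪ T)) atTop (𝓝 (Λ (S ∪ T))) :=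
      hΛ _ (union_mem_measurableCylinders hS hT)
    have h2 : Tendsto (fun i => ν (ψ i) S + ν (ψ i) T) atTop (𝓝 (Λ S + Λ T)) :=
      (hΛ S hS).add (hΛ T hT)
    have heq : (fun i => ν (ψ i) (S ∪ T)) = fun i => ν (ψ i) S + ν (ψ i) T := by
      funext i
      exact measure_union hd (MeasurableSet.of_mem_measurableCylinders hT)
    rw [heq] at h1
    exact tendsto_nhds_unique h1 h2
  -- finite subadditivity over covers
  have hsub : ∀ (C : Set FXX), C ∈ mcB → ∀ (t : Finset ℕ) (f : ℕ → Set FXX),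
      (∀ n ∈ t, f n ∈ mcB) → C ⊆ ⋃ n ∈ t, f n → Λ C ≤ ∑ n ∈ t, Λ (f n) := by
    intro C hC t f hf hcover
    have h1 : Tendsto (fun i => ν (ψ i) C) atTop (𝓝 (Λ C)) := hΛ C hC
    have h2 : Tendsto (fun i => ∑ n ∈ t, ν (ψ i) (f n)) atTop (𝓝 (∑ n ∈ t, Λ (f n))) :=
      tendsto_finset_sum _ fun n hn => hΛ _ (hf n hn)
    refine le_of_tendsto_of_tendsto h1 h2 (Eventually.of_forall fun i => ?_)
    calc ν (ψ i) C ≤ ν (ψ i) (⋃ n ∈ t, f n) := measure_mono hcover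
      _ ≤ ∑ n ∈ t, ν (ψ i) (f n) := measure_biUnion_finset_le _ _
  -- premeasure
  set m₀ : Set FXX → ℝ≥0∞ := fun S => if S ∈ mcB then Λ S else ∞ with hm₀def
  have hm₀empty : m₀ ∅ = 0 := by
    have : Λ ∅ = 0 := by
      have h1 : Tendsto (fun i => ν (ψ i) ∅) atTop (𝓝 (Λ ∅)) :=
        hΛ ∅ (empty_mem_measurableCylinders _)
      have h2 : Tendsto (fun i => ν (ψ i) ∅) atTop (𝓝 0) := by
        simp only [measure_empty]
        exact tendsto_const_nhds
      exact tendsto_nhds_unique h1 h2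
    have h' : m₀ ∅ = Λ ∅ := if_pos (empty_mem_measurableCylinders (fun _ : ℤ => Bool))
    rw [h', this]
  have hm₀eq : ∀ S ∈ mcB, m₀ S = Λ S := fun S hS => if_pos hS
  have hm₀top : ∀ S, S ∉ mcB → m₀ S = ∞ := fun S hS => if_neg hS
  set μstar := OuterMeasure.ofFunction m₀ hm₀empty with hμstar
  -- agreement on cylinders
  have hagree : ∀ C ∈ mcB, μstar C = Λ C := by
    intro C hC
    refine le_antisymm ?_ ?_
    · have := OuterMeasure.ofFunction_le (m := m₀) (m_empty := hm₀empty) C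
      rw [hm₀eq C hC] at this
      exact this
    · rw [hμstar, OuterMeasure.ofFunction_apply]
      refine le_iInf fun f => le_iInf fun hcover => ?_
      by_cases hall : ∀ n, f n ∈ mcB
      · -- compactness: finite subcover
        have hopen : ∀ n, IsOpen (f n) := fun n => (isClopen_of_mem_mc (hall n)).2
        have hcpt : IsCompact C := ((isClopen_of_mem_mc hC).1).isCompact
        obtain ⟨t, ht⟩ := hcpt.elim_finite_subcover f hopen hcover
        calc Λ C ≤ ∑ n ∈ t, Λ (f n) := hsub C hC t f (fun n _ => hall n) ht
          _ = ∑ n ∈ t, m₀ (f n) :=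
              Finset.sum_congr rfl fun n _ => (hm₀eq _ (hall n)).symm
          _ ≤ ∑' n, m₀ (f n) := ENNReal.sum_le_tsum t
      · push_neg at hall
        obtain ⟨n, hn⟩ := hall
        have : m₀ (f n) = ∞ := hm₀top _ hn
        have htop : (∑' n, m₀ (f n)) = ∞ :=
          top_le_iff.mp (this ▸ ENNReal.le_tsum n)
        rw [htop]; exact le_top
  -- caratheodory measurability
  have hcar : ∀ S ∈ mcB, μstar.caratheodory.MeasurableSet' S := by
    intro S hS
    refine OuterMeasure.ofFunction_caratheodory fun t => ?_
    by_cases ht : t ∈ mcB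
    · have h1 : t ∩ S ∈ mcB := inter_mem_measurableCylinders ht hS
      have h2 : t \ S ∈ mcB := diff_mem_measurableCylinders ht hS
      have : Λ (t ∩ S) + Λ (t \ S) = Λ ((t ∩ S) ∪ (t \ S)) := by
        rw [hadd _ h1 _ h2 (Disjoint.mono_left inter_subset_right disjoint_sdiff_right)]
      rw [hm₀eq _ ht, hm₀eq _ h1, hm₀eq _ h2, this, Set.inter_union_diff]
    · rw [hm₀top _ ht]
      exact le_top
  have hle : (inferInstance : MeasurableSpace FXX) ≤ μstar.caratheodory := by
    have : (inferInstance : MeasurableSpace FXX) = MeasurableSpace.generateFrom mcB :=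
      generateFrom_measurableCylinders.symm
    rw [this]
    exact generateFrom_le hcar
  refine ⟨ψ, hψ, μstar.toMeasure hle, ?_, ?_⟩
  · constructor
    rw [toMeasure_apply μstar hle MeasurableSet.univ,
      hagree univ (univ_mem_measurableCylinders _), hΛuniv]
  · intro S hS
    rw [toMeasure_apply μstar hle (MeasurableSet.of_mem_measurableCylinders hS), hagree S hS]
    exact hΛ S hS

/-! ### Properties of the shift and of `furstMeasure` -/

lemma furstShift_preimage_event (k n : ℤ) :
    furstShift k ⁻¹' furstEvent n = furstEvent (n - k) := by
  ext B
  simp only [furstShift, furstEvent, Set.mem_preimage, Set.mem_setOf_eq, Set.mem_image]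
  constructor
  · rintro ⟨a, ha, hak⟩
    have : a = n - k := by omega
    rwa [this] at ha
  · intro h
    exact ⟨n - k, h, by ring⟩

lemma measurable_furstShift (k : ℤ) : Measurable (furstShift k) := by
  refine measurable_generateFrom fun t ht => ?_
  obtain ⟨n, rfl⟩ := ht
  rw [furstShift_preimage_event]
  exact measurableSet_generateFrom (mem_range_self _)

lemma furstShift_furstShift (a b : ℤ) (B : FurstPoint) :
    furstShift a (furstShift b B) = furstShift (b + a) B := by
  cases B with
  | mk S =>
    simp only [furstShift, Set.image_image]
    congr 1
    ext n
    simp only [Set.mem_image]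
    constructor
    · rintro ⟨x, hx, rfl⟩; exact ⟨x, hx, by ring⟩
    · rintro ⟨x, hx, rfl⟩; exact ⟨x, hx, by ring⟩

@[simp] lemma furstShift_zero (B : FurstPoint) : furstShift 0 B = B := by
  cases B with
  | mk S => simp [furstShift]

lemma furstShift_image (k : ℤ) (E : Set FurstPoint) :
    furstShift k '' E = furstShift (-k) ⁻¹' E := by
  ext B
  simp only [Set.mem_image, Set.mem_preimage]
  constructor
  · rintro ⟨C, hC, rfl⟩
    rwa [furstShift_furstShift, add_neg_cancel, furstShift_zero]
  · intro h
    exact ⟨furstShift (-k) B, h, by rw [furstShift_furstShift, neg_add_cancel, furstShift_zero]⟩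

section FM

variable (N : ℕ → ℕ) (A : (m : ℕ) → Set (ZMod (N m))) (m : ℕ)

/-- The Dirac points of `furstMeasure`. -/
def furstPt (x l : ZMod (N m)) : FurstPoint := ⟨{n : ℤ | x + (n : ZMod (N m)) * l ∈ A m}⟩

lemma furstMeasure_apply {S : Set FurstPoint} (hS : MeasurableSet S) :
    furstMeasure N A m S = ((N m : ℝ≥0∞) * (N m / m : ℕ))⁻¹ *
      ∑ p : Fin (N m) × Fin (N m / m),
        S.indicator 1
          (furstPt N A m ((p.1 : ℕ) : ZMod (N m)) (((p.2 : ℕ) + 1 : ℕ) : ZMod (N m))) := by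
  rw [furstMeasure, Measure.smul_apply, Measure.finset_sum_apply, smul_eq_mul]
  congr 1
  refine Finset.sum_congr rfl fun p _ => ?_
  rw [Measure.dirac_apply' _ hS]
  rfl

lemma isProbabilityMeasure_furstMeasure (hm : 1 ≤ m) (hNm : m ≤ N m) :
    IsProbabilityMeasure (furstMeasure N A m) := by
  constructor
  rw [furstMeasure_apply N A m MeasurableSet.univ]
  have hL : 0 < N m / m := Nat.div_pos hNm (by omega)
  have hNpos : 0 < N m := by omega
  simp only [Set.indicator_univ, Pi.one_apply]
  rw [Finset.sum_const, Finset.card_univ, Fintype.card_prod, Fintype.card_fin, Fintype.card_fin,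
    nsmul_eq_mul, mul_one, Nat.cast_mul]
  refine ENNReal.inv_mul_cancel (mul_ne_zero ?_ ?_) (by finiteness)
  · exact_mod_cast Nat.cast_ne_zero.mpr hNpos.ne'
  · exact_mod_cast Nat.cast_ne_zero.mpr hL.ne'

lemma furstShift_furstPt (k : ℤ) (x l : ZMod (N m)) :
    furstShift k (furstPt N A m x l) = furstPt N A m (x - (k : ZMod (N m)) * l) l := by
  simp only [furstShift, furstPt]
  congr 1
  ext n
  simp only [Set.mem_image, Set.mem_setOf_eq]
  constructor
  · rintro ⟨a, ha, rfl⟩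
    have h : x - (k : ZMod (N m)) * l + ((a + k : ℤ) : ZMod (N m)) * l
        = x + (a : ZMod (N m)) * l := by push_cast; ring
    rw [h]; exact ha
  · intro h
    refine ⟨n - k, ?_, by ring⟩
    have h2 : x + ((n - k : ℤ) : ZMod (N m)) * l
        = x - (k : ZMod (N m)) * l + (n : ZMod (N m)) * l := by push_cast; ring
    rw [h2]; exact h

lemma furstMeasure_shift_preimage (hm : 1 ≤ m) (hNm : m ≤ N m) (k : ℤ)
    {S : Set FurstPoint} (hS : MeasurableSet S) :
    furstMeasure N A m (furstShift k ⁻¹' S) = furstMeasure N A m S := by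
  haveI : NeZero (N m) := ⟨by omega⟩
  rw [furstMeasure_apply N A m ((measurable_furstShift k) hS), furstMeasure_apply N A m hS]
  congr 1
  -- reindex via the bijection p ↦ (x - k * l, l)
  set σ : Fin (N m) × Fin (N m / m) → Fin (N m) × Fin (N m / m) := fun p =>
    (⟨((((p.1 : ℕ) : ZMod (N m))) - (k : ZMod (N m)) * (((p.2 : ℕ) + 1 : ℕ) : ZMod (N m))).val,
      ZMod.val_lt _⟩, p.2) with hσ
  have hσbij : Function.Bijective σ := by
    rw [Fintype.bijective_iff_injective_and_card]
    refine ⟨fun p q hpq => ?_, rfl⟩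
    have h2 := congrArg Prod.snd hpq
    simp only [hσ] at h2
    have h1v := congrArg (fun r : Fin (N m) × Fin (N m / m) => (r.1 : ℕ)) hpq
    simp only [hσ] at h1v
    have h1 : (((p.1 : ℕ) : ZMod (N m))) - (k : ZMod (N m)) * (((p.2 : ℕ) + 1 : ℕ) : ZMod (N m))
        = (((q.1 : ℕ) : ZMod (N m))) - (k : ZMod (N m)) * (((q.2 : ℕ) + 1 : ℕ) : ZMod (N m)) :=
      ZMod.val_injective _ h1v
    rw [h2] at h1
    have h1' : (((p.1 : ℕ) : ZMod (N m))) = (((q.1 : ℕ) : ZMod (N m))) := sub_left_inj.mp h1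
    have hv : (p.1 : ℕ) = (q.1 : ℕ) := by
      have := congrArg ZMod.val h1'
      rwa [ZMod.val_cast_of_lt p.1.isLt, ZMod.val_cast_of_lt q.1.isLt] at this
    exact Prod.ext (Fin.ext hv) h2
  refine Fintype.sum_bijective σ hσbij _ _ fun p => ?_
  -- pointwise equality of indicators
  have hpt : furstShift k
        (furstPt N A m ((p.1 : ℕ) : ZMod (N m)) (((p.2 : ℕ) + 1 : ℕ) : ZMod (N m)))
      = furstPt N A m (((σ p).1 : ℕ) : ZMod (N m)) ((((σ p).2 : ℕ) + 1 : ℕ) : ZMod (N m)) := by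
    rw [furstShift_furstPt]
    simp only [hσ]
    rw [ZMod.natCast_rightInverse _]
  by_cases hmem : furstPt N A m ((p.1 : ℕ) : ZMod (N m)) (((p.2 : ℕ) + 1 : ℕ) : ZMod (N m))
      ∈ furstShift k ⁻¹' S
  · rw [Set.indicator_of_mem hmem, Set.indicator_of_mem (by rw [← hpt]; exact hmem)]
    rfl
  · rw [Set.indicator_of_notMem hmem, Set.indicator_of_notMem (by rw [← hpt]; exact hmem)]

end FM

/-- Regular events are measurable, and correspond to measurable cylinders of the
Cantor cube. -/
lemma furstReg_cylinder {E : Set FurstPoint} (hE : E ∈ furstReg) :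
    MeasurableSet E ∧ eFinv ⁻¹' E ∈ mcB := by
  obtain ⟨s, hs⟩ := hE
  have himg : furstEvent '' ↑s ⊆ Set.range furstEvent := by
    rintro t ⟨n, -, rfl⟩; exact mem_range_self n
  have hmeas : MeasurableSet E := (generateFrom_mono himg) _ hs
  set π : FurstPoint → ((i : s) → Bool) := fun B i => eF B (i : ℤ) with hπ
  have hle2 : MeasurableSpace.generateFrom (furstEvent '' ↑s) ≤
      MeasurableSpace.comap π ⊤ := by
    refine generateFrom_le fun t ht => ?_
    obtain ⟨n, hn, rfl⟩ := ht
    refine measurableSet_comap.mpr ⟨{g : (i : s) → Bool | g ⟨n, hn⟩ = true}, trivial, ?_⟩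
    ext B
    simp [hπ, furstEvent, eF]
  obtain ⟨F, -, hF⟩ := measurableSet_comap.mp (hle2 _ hs)
  refine ⟨hmeas, ?_⟩
  have hFmeas : MeasurableSet F := F.to_countable.measurableSet
  have hcyl : eFinv ⁻¹' E = cylinder (α := fun _ : ℤ => Bool) s F := by
    rw [← hF]
    ext f
    simp only [Set.mem_preimage, mem_cylinder]
    have hres : π (eFinv f) = s.restrict f := by
      funext i
      show eF (eFinv f) (i : ℤ) = f (i : ℤ)
      rw [eF_eFinv]
    rw [hres]
  rw [hcyl]
  exact cylinder_mem_measurableCylinders (α := fun _ : ℤ => Bool) s F hFmeas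

/-- **The Furstenberg correspondence principle.**  Given cyclic groups `ℤ_{N(m)}` with
`N(m) ≥ m` and subsets `A(m) ⊆ ℤ_{N(m)}`, there is a subsequence `m_1 < m_2 < …` of positive
integers and a probability measure `P^(∞)` on the Furstenberg universal space such that
`P^(m_i)(E) → P^(∞)(E)` for every regular event `E`, and `P^(∞)` is shift-invariant. -/
theorem furstenberg_correspondence
    (N : ℕ → ℕ) (hN : ∀ m, 1 ≤ m → m ≤ N m)
    (A : (m : ℕ) → Set (ZMod (N m))) :
    ∃ φ : ℕ → ℕ, StrictMono φ ∧ (∀ i, 0 < φ i) ∧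
      ∃ Pinf : Measure FurstPoint, IsProbabilityMeasure Pinf ∧
        (∀ E ∈ furstReg,
          Tendsto (fun i => furstMeasure N A (φ i) E) atTop (nhds (Pinf E))) ∧
        (∀ E : Set FurstPoint, MeasurableSet E → ∀ n : ℤ,
          Pinf (furstShift n '' E) = Pinf E) := by
  classical
  set ν : ℕ → Measure FXX := fun i => (furstMeasure N A (i + 1)).map eF with hν
  have hνprob : ∀ i, IsProbabilityMeasure (ν i) := by
    intro i
    haveI := isProbabilityMeasure_furstMeasure N A (i + 1) (by omega) (hN (i + 1) (by omega))
    exact Measure.isProbabilityMeasure_map measurable_eF.aemeasurable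
  obtain ⟨ψ, hψ, νinf, hνinfprob, hconv⟩ := exists_subseq_limit_measure ν hνprob
  refine ⟨fun i => ψ i + 1, fun a b hab => by simpa using Nat.add_lt_add_right (hψ hab) 1,
    fun i => Nat.succ_pos _, ?_⟩
  set Pinf : Measure FurstPoint := νinf.map eFinv with hPinf
  have hPinfprob : IsProbabilityMeasure Pinf :=
    Measure.isProbabilityMeasure_map measurable_eFinv.aemeasurable
  have hPinf_apply : ∀ {E : Set FurstPoint}, MeasurableSet E → Pinf E = νinf (eFinv ⁻¹' E) := by
    intro E hE
    rw [hPinf, Measure.map_apply measurable_eFinv hE]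
  have hν_apply : ∀ (i : ℕ) {E : Set FurstPoint}, MeasurableSet E →
      furstMeasure N A (ψ i + 1) E = ν (ψ i) (eFinv ⁻¹' E) := by
    intro i E hE
    rw [hν]
    simp only
    rw [Measure.map_apply measurable_eF (measurable_eFinv hE)]
    congr 1
    ext B
    simp
  have hReg : ∀ E ∈ furstReg,
      Tendsto (fun i => furstMeasure N A (ψ i + 1) E) atTop (nhds (Pinf E)) := by
    intro E hE
    obtain ⟨hEmeas, hEc⟩ := furstReg_cylinder hE
    rw [hPinf_apply hEmeas]
    exact (hconv _ hEc).congr fun i => (hν_apply i hEmeas).symm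
  refine ⟨Pinf, hPinfprob, hReg, ?_⟩
  -- the generating π-system of finite intersections of events
  set CC : Set (Set FurstPoint) := {S | ∃ s : Finset ℤ, S = ⋂ n ∈ s, furstEvent n} with hCC
  have hCCreg : ∀ S ∈ CC, S ∈ furstReg := by
    rintro S ⟨s, rfl⟩
    exact ⟨s, Finset.measurableSet_biInter s fun n hn =>
      measurableSet_generateFrom ⟨n, hn, rfl⟩⟩
  have hgen : (inferInstance : MeasurableSpace FurstPoint) = MeasurableSpace.generateFrom CC := by
    refine le_antisymm ?_ ?_
    · refine generateFrom_le fun t ht => ?_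
      obtain ⟨n, rfl⟩ := ht
      refine measurableSet_generateFrom ⟨({n} : Finset ℤ), ?_⟩
      simp
    · refine generateFrom_le ?_
      rintro t ⟨s, rfl⟩
      exact Finset.measurableSet_biInter s fun n _ =>
        measurableSet_generateFrom (mem_range_self n)
  have hpi : IsPiSystem CC := by
    rintro S ⟨s1, rfl⟩ T ⟨s2, rfl⟩ -
    refine ⟨s1 ∪ s2, ?_⟩
    ext B
    simp only [Set.mem_iInter, Set.mem_inter_iff, Finset.mem_union]
    exact ⟨fun h n hn => hn.elim (fun h1 => h.1 n h1) (fun h2 => h.2 n h2),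
      fun h => ⟨fun n hn => h n (Or.inl hn), fun n hn => h n (Or.inr hn)⟩⟩
  have hmap : ∀ k : ℤ, Pinf.map (furstShift k) = Pinf := by
    intro k
    haveI : IsProbabilityMeasure (Pinf.map (furstShift k)) :=
      Measure.isProbabilityMeasure_map (measurable_furstShift k).aemeasurable
    refine ext_of_generate_finite CC hgen hpi ?_ ?_
    · rintro S ⟨s, rfl⟩
      have hS1CC : (⋂ n ∈ s, furstEvent n) ∈ CC := ⟨s, rfl⟩
      have hS1reg : (⋂ n ∈ s, furstEvent n) ∈ furstReg := hCCreg _ hS1CC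
      have hSmeas := (furstReg_cylinder hS1reg).1
      have hpre : furstShift k ⁻¹' (⋂ n ∈ s, furstEvent n)
          = ⋂ n ∈ s, furstEvent (n - k) := by
        rw [Set.preimage_iInter₂]
        exact Set.iInter₂_congr fun n _ => furstShift_preimage_event k n
      have hS2reg : (⋂ n ∈ s, furstEvent (n - k)) ∈ furstReg := by
        refine ⟨s.image (fun n => n - k), Finset.measurableSet_biInter s fun n hn =>
          measurableSet_generateFrom ⟨n - k, ?_, rfl⟩⟩
        simp only [Finset.coe_image, Set.mem_image, Finset.mem_coe]
        exact ⟨n, hn, rfl⟩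
      rw [Measure.map_apply (measurable_furstShift k) hSmeas, hpre]
      have t1 := hReg _ hS1reg
      have t2 := hReg _ hS2reg
      have heq : ∀ i, furstMeasure N A (ψ i + 1) (⋂ n ∈ s, furstEvent (n - k))
          = furstMeasure N A (ψ i + 1) (⋂ n ∈ s, furstEvent n) := by
        intro i
        rw [← hpre]
        exact furstMeasure_shift_preimage N A _ (by omega) (hN _ (by omega)) k hSmeas
      exact tendsto_nhds_unique (t2.congr heq) t1
    · rw [Measure.map_apply (measurable_furstShift k) MeasurableSet.univ]
      simp
  intro E hE n
  rw [furstShift_image]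
  conv_rhs => rw [← hmap (-n)]
  rw [Measure.map_apply (measurable_furstShift (-n)) hE]
end

section
/- For every m ≥ 1, let G^(m) = (V^(m), E^(m)) be a finite undirected graph, and let P^(m) be the probability measure on (Ω, B_max) obtained as the pushforward of the product uniform measure on (V^(m))^ℕ (i.e. an i.i.d. uniform sequence x_1^(m), x_2^(m), … of vertices) under the map (x_1, x_2, …) ↦ (ℕ, E_∞) where E_∞ := { {i,j} ∈ C(ℕ,2) : {x_i, x_j} ∈ E^(m) }. Then there exists a strictly increasing sequence m_1 < m_2 < … of positive integers and a probability measure P^(∞) on (Ω, B_max) such that: (weak convergence) lim_{i→∞} P^(m_i)(E) = P^(∞)(E) for every regular event E ∈ B_reg; and (permutation invariance) P^(∞)(σE) = P^(∞)(E) for every E ∈ B_max and every permutation σ ∈ S_∞. -/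
open MeasureTheory Filter MeasurableSpace
open scoped ENNReal

/-- The generating events `A_{i,j} = {G : {i,j} ∈ E_∞}` of the graph universal space, whose
points are (simple, loopless, undirected) graphs on `ℕ`. -/
def graphEvent (i j : ℕ) : Set (SimpleGraph ℕ) := {G | G.Adj i j}

/-- The universal σ-algebra `B_max` on the graph universal space, generated by the `A_{i,j}`. -/
instance : MeasurableSpace (SimpleGraph ℕ) :=
  MeasurableSpace.generateFrom {E | ∃ i j : ℕ, E = graphEvent i j}

/-- The regular algebra `B_reg`: events generated by finitely many of the `A_{i,j}`. -/
def graphReg : Set (Set (SimpleGraph ℕ)) :=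
  {E | ∃ s : Finset (ℕ × ℕ),
    MeasurableSet[MeasurableSpace.generateFrom
      ((fun p : ℕ × ℕ => graphEvent p.1 p.2) '' s)] E}

/-- The random lift of a finite graph `G` along a sequence of vertices `x : ℕ → V`:
the infinite graph with edge set `{ {i,j} : {x i, x j} ∈ E(G) }`. -/
def graphLift {V : Type} (G : SimpleGraph V) (x : ℕ → V) : SimpleGraph ℕ where
  Adj i j := G.Adj (x i) (x j)
  symm := ⟨fun _ _ h => G.adj_symm h⟩
  loopless := ⟨fun _ h => G.irrefl h⟩

/-- The action of a permutation `σ ∈ S_∞` on infinite graphs, sending the edge set `E_∞` to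
`σE_∞ = { {σ i, σ j} : {i,j} ∈ E_∞ }`. -/
def graphPermAct (σ : Equiv.Perm ℕ) (G : SimpleGraph ℕ) : SimpleGraph ℕ where
  Adj i j := G.Adj (σ.symm i) (σ.symm j)
  symm := ⟨fun _ _ h => G.adj_symm h⟩
  loopless := ⟨fun _ h => G.irrefl h⟩

/-- The measure `P^(m)`: the pushforward of the product uniform measure `μ` on `V^ℕ`
(an i.i.d. uniform sequence of vertices) under the graph lifting map. -/
noncomputable def graphUnivMeasure {V : Type} (G : SimpleGraph V)
    (μ : @Measure (ℕ → V) (@MeasurableSpace.pi ℕ (fun _ => V) (fun _ => ⊤))) :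
    Measure (SimpleGraph ℕ) :=
  @Measure.map _ _ (@MeasurableSpace.pi ℕ (fun _ => V) (fun _ => ⊤)) _ (graphLift G) μ

open scoped Topology

noncomputable section GraphCorrAux
namespace GraphCorr
open Set TopologicalSpace

abbrev GX := (ℕ × ℕ) → Bool
abbrev PatB (s : Finset (ℕ × ℕ)) := {p // p ∈ s} → Bool

def gEnc (G : SimpleGraph ℕ) : GX := fun p => @decide (G.Adj p.1 p.2) (Classical.dec _)

def gDec (x : GX) : SimpleGraph ℕ where
  Adj i j := i ≠ j ∧ x (i, j) = true ∧ x (j, i) = true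
  symm := ⟨fun i j h => ⟨Ne.symm h.1, h.2.2, h.2.1⟩⟩
  loopless := ⟨fun i h => h.1 rfl⟩

lemma gEnc_apply_eq_true {G : SimpleGraph ℕ} {p : ℕ × ℕ} :
    gEnc G p = true ↔ G.Adj p.1 p.2 := by
  simp [gEnc]

lemma gDec_gEnc (G : SimpleGraph ℕ) : gDec (gEnc G) = G := by
  ext i j
  simp only [gDec, gEnc_apply_eq_true (p := (i,j)), gEnc_apply_eq_true (p := (j,i))]
  constructor
  · rintro ⟨-, h, -⟩; exact h
  · intro h; exact ⟨G.ne_of_adj h, h, G.adj_symm h⟩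

def rho (s : Finset (ℕ × ℕ)) (x : GX) : PatB s := fun p => x p.1

def psi (s : Finset (ℕ × ℕ)) (G : SimpleGraph ℕ) : PatB s := rho s (gEnc G)

def Cyl (s : Finset (ℕ × ℕ)) (g : PatB s) : Set GX := rho s ⁻¹' {g}

def AtomE (s : Finset (ℕ × ℕ)) (g : PatB s) : Set (SimpleGraph ℕ) := psi s ⁻¹' {g}

lemma measurableSet_graphEvent (i j : ℕ) : MeasurableSet (graphEvent i j) :=
  measurableSet_generateFrom ⟨i, j, rfl⟩

lemma measurableSet_decide_event (i j : ℕ) (b : Bool) :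
    MeasurableSet {G : SimpleGraph ℕ | gEnc G (i, j) = b} := by
  cases b
  · have : {G : SimpleGraph ℕ | gEnc G (i, j) = false} = (graphEvent i j)ᶜ := by
      ext G; simp [graphEvent, ← gEnc_apply_eq_true (p := (i,j))]
    rw [this]; exact (measurableSet_graphEvent i j).compl
  · have : {G : SimpleGraph ℕ | gEnc G (i, j) = true} = graphEvent i j := by
      ext G; simp [graphEvent, gEnc_apply_eq_true (p := (i,j))]
    rw [this]; exact measurableSet_graphEvent i j

lemma measurableSet_atomE (s : Finset (ℕ × ℕ)) (g : PatB s) :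
    MeasurableSet (AtomE s g) := by
  have : AtomE s g = ⋂ p : {p // p ∈ s}, {G : SimpleGraph ℕ | gEnc G p.1 = g p} := by
    ext G
    simp only [AtomE, psi, rho, Set.mem_preimage, Set.mem_singleton_iff, Set.mem_iInter,
      funext_iff, Set.mem_setOf_eq]
  rw [this]
  exact MeasurableSet.iInter fun p => measurableSet_decide_event p.1.1 p.1.2 (g p)

lemma measurable_psi_preimage (s : Finset (ℕ × ℕ)) (T : Set (PatB s)) :
    MeasurableSet (psi s ⁻¹' T) := by
  have : psi s ⁻¹' T = ⋃ g ∈ T, AtomE s g := by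
    ext G; simp [AtomE]
  rw [this]
  exact MeasurableSet.biUnion T.to_countable fun g _ => measurableSet_atomE s g

lemma measurableSet_Cyl (s : Finset (ℕ × ℕ)) (g : PatB s) : MeasurableSet (Cyl s g) := by
  have : Cyl s g = ⋂ p : {p // p ∈ s}, (fun x : GX => x p.1) ⁻¹' {g p} := by
    ext x
    simp only [Cyl, rho, Set.mem_preimage, Set.mem_singleton_iff, Set.mem_iInter, funext_iff]
  rw [this]
  exact MeasurableSet.iInter fun p => (measurable_pi_apply _) (measurableSet_singleton _)

lemma measurableSet_rho_preimage (s : Finset (ℕ × ℕ)) (T : Set (PatB s)) :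
    MeasurableSet (rho s ⁻¹' T) := by
  have : rho s ⁻¹' T = ⋃ g ∈ T, Cyl s g := by
    ext x; simp [Cyl]
  rw [this]
  exact MeasurableSet.biUnion T.to_countable fun g _ => measurableSet_Cyl s g

lemma measurable_gEnc : Measurable gEnc := by
  apply measurable_pi_iff.mpr
  intro p
  apply measurable_to_countable'
  intro b
  exact measurableSet_decide_event p.1 p.2 b

lemma measurable_gDec : Measurable gDec := by
  refine measurable_generateFrom ?_
  rintro E ⟨i, j, rfl⟩
  have : gDec ⁻¹' graphEvent i j =
      {x : GX | x (i, j) = true} ∩ {x : GX | x (j, i) = true} ∩ (if i = j then ∅ else univ) := by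
    ext x
    by_cases h : i = j <;> simp [gDec, graphEvent, h, and_comm, and_assoc]
  rw [this]
  split_ifs with h
  · simp
  · refine MeasurableSet.inter (MeasurableSet.inter ?_ ?_) MeasurableSet.univ <;>
      exact (measurable_pi_apply _) (measurableSet_singleton _)

lemma measurable_graphLift {V : Type} [Fintype V] (G : SimpleGraph V) :
    @Measurable _ _ (@MeasurableSpace.pi ℕ (fun _ => V) (fun _ => ⊤)) _ (graphLift G) := by
  letI : MeasurableSpace V := ⊤
  letI : MeasurableSingletonClass V := ⟨fun _ => MeasurableSpace.measurableSet_top⟩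
  refine measurable_generateFrom ?_
  rintro E ⟨i, j, rfl⟩
  have : graphLift G ⁻¹' graphEvent i j
      = (fun x : ℕ → V => (x i, x j)) ⁻¹' {q : V × V | G.Adj q.1 q.2} := rfl
  rw [this]
  exact (Measurable.prod (measurable_pi_apply i) (measurable_pi_apply j))
    ((Set.toFinite _).measurableSet)
def resP {s s' : Finset (ℕ × ℕ)} (h : s ⊆ s') (g' : PatB s') : PatB s :=
  fun p => g' ⟨p.1, h p.2⟩

def fiberF {s s' : Finset (ℕ × ℕ)} (h : s ⊆ s') (g : PatB s) : Finset (PatB s') :=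
  Finset.univ.filter (fun g' => resP h g' = g)

def extPat (s : Finset (ℕ × ℕ)) (g : PatB s) : GX :=
  fun p => if h : p ∈ s then g ⟨p, h⟩ else false

lemma rho_extPat (s : Finset (ℕ × ℕ)) (g : PatB s) : rho s (extPat s g) = g := by
  funext p; simp [rho, extPat, p.2]

lemma mem_Cyl {s : Finset (ℕ × ℕ)} {g : PatB s} {x : GX} : x ∈ Cyl s g ↔ rho s x = g :=
  Iff.rfl

lemma Cyl_nonempty (s : Finset (ℕ × ℕ)) (g : PatB s) : (Cyl s g).Nonempty :=
  ⟨extPat s g, rho_extPat s g⟩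

lemma resP_rho {s s' : Finset (ℕ × ℕ)} (h : s ⊆ s') (x : GX) :
    resP h (rho s' x) = rho s x := rfl

lemma Cyl_eq_biUnion {s s' : Finset (ℕ × ℕ)} (h : s ⊆ s') (g : PatB s) :
    Cyl s g = ⋃ g' ∈ fiberF h g, Cyl s' g' := by
  ext x
  simp only [mem_Cyl, Set.mem_iUnion, fiberF, Finset.mem_filter, Finset.mem_univ, true_and]
  constructor
  · intro hx; exact ⟨rho s' x, by rw [resP_rho h x, hx], rfl⟩
  · rintro ⟨g', hg', rfl⟩; rw [← hg', resP_rho h x]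

lemma pairwise_disjoint_Cyl (s : Finset (ℕ × ℕ)) (t : Finset (PatB s)) :
    (t : Set (PatB s)).PairwiseDisjoint (Cyl s) := by
  intro g _ g' _ hne
  refine Set.disjoint_left.mpr fun x hx hx' => hne ?_
  rw [← mem_Cyl.mp hx, ← mem_Cyl.mp hx']

lemma meas_Cyl_sum {s s' : Finset (ℕ × ℕ)} (ν : Measure GX) (h : s ⊆ s') (g : PatB s)
    (hm : ∀ (s₀ : Finset (ℕ × ℕ)) (g₀ : PatB s₀), MeasurableSet (Cyl s₀ g₀)) :
    ν (Cyl s g) = ∑ g' ∈ fiberF h g, ν (Cyl s' g') := by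
  rw [Cyl_eq_biUnion h g]
  exact measure_biUnion_finset (pairwise_disjoint_Cyl s' _) fun g' _ => hm s' g'

/-! ### The content built from a consistent family `q` -/

variable (q : ∀ s : Finset (ℕ × ℕ), PatB s → ℝ≥0∞)

def imgF (s : Finset (ℕ × ℕ)) (A : Set GX) : Finset (PatB s) :=
  (Set.toFinite (rho s '' A)).toFinset

lemma mem_imgF {s : Finset (ℕ × ℕ)} {A : Set GX} {g : PatB s} :
    g ∈ imgF s A ↔ ∃ x ∈ A, rho s x = g := by
  simp [imgF, Set.Finite.mem_toFinset]

def patSum (s : Finset (ℕ × ℕ)) (A : Set GX) : ℝ≥0∞ := ∑ g ∈ imgF s A, q s g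

def lamF (A : Set GX) : ℝ≥0∞ := ⨅ s : Finset (ℕ × ℕ), patSum q s A

lemma patSum_mono {s : Finset (ℕ × ℕ)} {A B : Set GX} (h : A ⊆ B) :
    patSum q s A ≤ patSum q s B := by
  refine Finset.sum_le_sum_of_subset fun g hg => ?_
  rw [mem_imgF] at hg ⊢
  obtain ⟨x, hx, rfl⟩ := hg
  exact ⟨x, h hx, rfl⟩

lemma patSum_anti (hq2 : ∀ {s s' : Finset (ℕ × ℕ)} (h : s ⊆ s') (g : PatB s),
      q s g = ∑ g' ∈ fiberF h g, q s' g')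
    {s s' : Finset (ℕ × ℕ)} (h : s ⊆ s') (A : Set GX) :
    patSum q s' A ≤ patSum q s A := by
  classical
  have hsub : imgF s' A ⊆ (imgF s A).biUnion (fun g => fiberF h g) := by
    intro g' hg'
    rw [mem_imgF] at hg'
    obtain ⟨x, hx, rfl⟩ := hg'
    refine Finset.mem_biUnion.mpr ⟨rho s x, mem_imgF.mpr ⟨x, hx, rfl⟩, ?_⟩
    simp [fiberF, resP_rho h x]
  calc patSum q s' A ≤ ∑ g' ∈ (imgF s A).biUnion (fun g => fiberF h g), q s' g' :=
        Finset.sum_le_sum_of_subset hsub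
    _ = ∑ g ∈ imgF s A, ∑ g' ∈ fiberF h g, q s' g' := by
        have hdisj : Set.PairwiseDisjoint ↑(imgF s A) (fiberF h (s' := s')) := by
          intro g₁ _ g₂ _ hne
          refine Finset.disjoint_left.mpr fun g' hg₁ hg₂ => hne ?_
          simp only [fiberF, Finset.mem_filter] at hg₁ hg₂
          rw [← hg₁.2, ← hg₂.2]
        exact Finset.sum_biUnion hdisj
    _ = patSum q s A := by
        refine Finset.sum_congr rfl fun g _ => ?_
        exact (hq2 h g).symm

lemma lamF_le_patSum (s : Finset (ℕ × ℕ)) (A : Set GX) : lamF q A ≤ patSum q s A :=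
  iInf_le _ s

lemma lamF_mono {A B : Set GX} (h : A ⊆ B) : lamF q A ≤ lamF q B :=
  le_iInf fun s => (lamF_le_patSum q s A).trans (patSum_mono q h)

lemma lamF_sup_le (hq2 : ∀ {s s' : Finset (ℕ × ℕ)} (h : s ⊆ s') (g : PatB s),
      q s g = ∑ g' ∈ fiberF h g, q s' g') (A B : Set GX) : lamF q (A ∪ B) ≤ lamF q A + lamF q B := by
  have key : (⨅ s, patSum q s A) + (⨅ s, patSum q s B)
      = ⨅ s, (patSum q s A + patSum q s B) := by
    refine ENNReal.iInf_add_iInf fun i j => ⟨i ∪ j, ?_⟩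
    exact add_le_add (patSum_anti q @hq2 Finset.subset_union_left A)
      (patSum_anti q @hq2 Finset.subset_union_right B)
  rw [lamF, lamF, lamF, key]
  refine le_iInf fun s => (iInf_le _ s).trans ?_
  have : imgF s (A ∪ B) ⊆ imgF s A ∪ imgF s B := by
    intro g hg
    rw [mem_imgF] at hg
    obtain ⟨x, hx, rfl⟩ := hg
    rcases hx with hx | hx
    · exact Finset.mem_union_left _ (mem_imgF.mpr ⟨x, hx, rfl⟩)
    · exact Finset.mem_union_right _ (mem_imgF.mpr ⟨x, hx, rfl⟩)
  calc patSum q s (A ∪ B) ≤ ∑ g ∈ imgF s A ∪ imgF s B, q s g :=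
        Finset.sum_le_sum_of_subset this
    _ ≤ patSum q s A + patSum q s B := by
        rw [← Finset.union_sdiff_self_eq_union, Finset.sum_union Finset.disjoint_sdiff]
        exact add_le_add le_rfl (Finset.sum_le_sum_of_subset Finset.sdiff_subset)

lemma exists_sep {K K' : Set GX} (hK : IsCompact K) (hK' : IsCompact K') (hd : Disjoint K K') :
    ∃ s₀ : Finset (ℕ × ℕ), ∀ x ∈ K, ∀ y ∈ K', rho s₀ x ≠ rho s₀ y := by
  by_contra hcon
  push_neg at hcon
  set D : Finset (ℕ × ℕ) → Set (GX × GX) :=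
    fun s => (K ×ˢ K') ∩ {z | rho s z.1 = rho s z.2} with hD
  have hDne : ∀ s, (D s).Nonempty := by
    intro s
    obtain ⟨x, hx, y, hy, hxy⟩ := hcon s
    exact ⟨(x, y), ⟨⟨hx, hy⟩, hxy⟩⟩
  have hDcl : ∀ s, IsClosed (D s) := by
    intro s
    refine IsClosed.inter ((hK.isClosed).prod (hK'.isClosed)) ?_
    have : {z : GX × GX | rho s z.1 = rho s z.2}
        = ⋂ p : {p // p ∈ s}, {z : GX × GX | z.1 p.1 = z.2 p.1} := by
      ext z
      simp only [Set.mem_setOf_eq, Set.mem_iInter, funext_iff]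
      rfl
    rw [this]
    exact isClosed_iInter fun p => isClosed_eq
      ((continuous_apply p.1).comp continuous_fst) ((continuous_apply p.1).comp continuous_snd)
  have hDcp : ∀ s, IsCompact (D s) :=
    fun s => (hK.prod hK').of_isClosed_subset (hDcl s) Set.inter_subset_left
  have hdir : Directed (· ⊇ ·) D := by
    intro s t
    refine ⟨s ∪ t, ?_, ?_⟩
    · rintro z ⟨hz1, hz2⟩
      exact ⟨hz1, by
        have := congrArg (resP (Finset.subset_union_left (s₂ := t))) hz2
        rwa [resP_rho, resP_rho] at this⟩
    · rintro z ⟨hz1, hz2⟩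
      exact ⟨hz1, by
        have := congrArg (resP (Finset.subset_union_right (s₁ := s))) hz2
        rwa [resP_rho, resP_rho] at this⟩
  obtain ⟨z, hz⟩ :=
    IsCompact.nonempty_iInter_of_directed_nonempty_isCompact_isClosed D hdir hDne hDcp hDcl
  simp only [Set.mem_iInter] at hz
  have hzK : z.1 ∈ K := ((hz ∅).1).1
  have hzK' : z.2 ∈ K' := ((hz ∅).1).2
  have hzeq : z.1 = z.2 := by
    funext p
    have := (hz {p}).2
    have := congrFun this ⟨p, Finset.mem_singleton_self p⟩
    exact this
  exact Set.disjoint_left.mp hd hzK (hzeq ▸ hzK')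

lemma lamF_sup_disjoint
    (hq2 : ∀ {s s' : Finset (ℕ × ℕ)} (h : s ⊆ s') (g : PatB s),
      q s g = ∑ g' ∈ fiberF h g, q s' g')
    {K K' : Set GX} (hK : IsCompact K) (hK' : IsCompact K') (hd : Disjoint K K') :
    lamF q (K ∪ K') = lamF q K + lamF q K' := by
  refine le_antisymm (lamF_sup_le q @hq2 K K') ?_
  obtain ⟨s₀, hs₀⟩ := exists_sep hK hK' hd
  refine le_iInf fun s => ?_
  have h1 : lamF q K + lamF q K' ≤ patSum q (s ∪ s₀) K + patSum q (s ∪ s₀) K' :=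
    add_le_add (lamF_le_patSum q _ K) (lamF_le_patSum q _ K')
  have himg : imgF (s ∪ s₀) (K ∪ K') = imgF (s ∪ s₀) K ∪ imgF (s ∪ s₀) K' := by
    ext g
    simp only [mem_imgF, Finset.mem_union]
    constructor
    · rintro ⟨x, hx | hx, rfl⟩
      · exact Or.inl ⟨x, hx, rfl⟩
      · exact Or.inr ⟨x, hx, rfl⟩
    · rintro (⟨x, hx, rfl⟩ | ⟨x, hx, rfl⟩)
      · exact ⟨x, Or.inl hx, rfl⟩
      · exact ⟨x, Or.inr hx, rfl⟩
  have hdisj : Disjoint (imgF (s ∪ s₀) K) (imgF (s ∪ s₀) K') := by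
    refine Finset.disjoint_left.mpr fun g hg hg' => ?_
    obtain ⟨x, hx, rfl⟩ := mem_imgF.mp hg
    obtain ⟨y, hy, hxy⟩ := mem_imgF.mp hg'
    refine hs₀ x hx y hy ?_
    have := congrArg (resP (Finset.subset_union_right (s₁ := s))) hxy.symm
    rwa [resP_rho, resP_rho] at this
  have h2 : patSum q (s ∪ s₀) K + patSum q (s ∪ s₀) K' = patSum q (s ∪ s₀) (K ∪ K') := by
    rw [patSum, patSum, patSum, himg]
    exact (Finset.sum_union hdisj).symm
  exact h1.trans (h2.le.trans (patSum_anti q @hq2 Finset.subset_union_left (K ∪ K')))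

lemma patSum_Cyl_of_subset
    (hq2 : ∀ {s s' : Finset (ℕ × ℕ)} (h : s ⊆ s') (g : PatB s),
      q s g = ∑ g' ∈ fiberF h g, q s' g')
    {s₀ s : Finset (ℕ × ℕ)} (h : s₀ ⊆ s) (g : PatB s₀) :
    patSum q s (Cyl s₀ g) = q s₀ g := by
  have himg : imgF s (Cyl s₀ g) = fiberF h g := by
    ext g'
    simp only [mem_imgF, fiberF, Finset.mem_filter, Finset.mem_univ, true_and]
    constructor
    · rintro ⟨x, hx, rfl⟩
      rw [resP_rho h x]
      exact mem_Cyl.mp hx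
    · intro hg'
      refine ⟨extPat s g', ?_, rho_extPat s g'⟩
      rw [mem_Cyl, ← resP_rho h (extPat s g'), rho_extPat s g', hg']
  rw [patSum, himg, ← hq2 h g]

lemma lamF_Cyl
    (hq2 : ∀ {s s' : Finset (ℕ × ℕ)} (h : s ⊆ s') (g : PatB s),
      q s g = ∑ g' ∈ fiberF h g, q s' g')
    (s₀ : Finset (ℕ × ℕ)) (g : PatB s₀) :
    lamF q (Cyl s₀ g) = q s₀ g := by
  refine le_antisymm
    ((lamF_le_patSum q s₀ _).trans_eq (patSum_Cyl_of_subset q @hq2 (Finset.Subset.refl s₀) g)) ?_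
  refine le_iInf fun s => ?_
  have h1 : patSum q (s ∪ s₀) (Cyl s₀ g) ≤ patSum q s (Cyl s₀ g) :=
    patSum_anti q @hq2 Finset.subset_union_left _
  rw [patSum_Cyl_of_subset q @hq2 (Finset.subset_union_right (s₁ := s)) g] at h1
  exact h1

instance : IsEmpty {p : ℕ × ℕ // p ∈ (∅ : Finset (ℕ × ℕ))} :=
  ⟨fun p => Finset.notMem_empty p.1 p.2⟩

lemma univ_eq_Cyl : (Set.univ : Set GX) = Cyl ∅ (fun p => isEmptyElim p) := by
  ext x
  simp only [Set.mem_univ, mem_Cyl, true_iff]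
  exact Subsingleton.elim _ _

lemma continuous_rho (s : Finset (ℕ × ℕ)) : Continuous (rho s) :=
  continuous_pi fun p => continuous_apply p.1

lemma isOpen_Cyl (s : Finset (ℕ × ℕ)) (g : PatB s) : IsOpen (Cyl s g) :=
  (isOpen_discrete _).preimage (continuous_rho s)

lemma isClosed_Cyl (s : Finset (ℕ × ℕ)) (g : PatB s) : IsClosed (Cyl s g) :=
  (isClosed_singleton).preimage (continuous_rho s)

lemma isCompact_Cyl (s : Finset (ℕ × ℕ)) (g : PatB s) : IsCompact (Cyl s g) :=
  (isClosed_Cyl s g).isCompact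

lemma patSum_empty_le_one (hq1 : ∀ s g, q s g ≤ 1) (A : Set GX) : patSum q ∅ A ≤ 1 := by
  have hc : (imgF ∅ A).card ≤ 1 :=
    Finset.card_le_one.mpr fun a _ b _ => Subsingleton.elim a b
  calc patSum q ∅ A ≤ ∑ _g ∈ imgF ∅ A, (1 : ℝ≥0∞) := Finset.sum_le_sum fun g _ => hq1 ∅ g
    _ = ((imgF ∅ A).card : ℝ≥0∞) := by simp
    _ ≤ 1 := by exact_mod_cast hc

lemma lamF_le_one (hq1 : ∀ s g, q s g ≤ 1) (A : Set GX) : lamF q A ≤ 1 :=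
  (lamF_le_patSum q ∅ A).trans (patSum_empty_le_one q hq1 A)

lemma lamF_ne_top (hq1 : ∀ s g, q s g ≤ 1) (A : Set GX) : lamF q A ≠ ⊤ :=
  ((lamF_le_one q hq1 A).trans_lt ENNReal.one_lt_top).ne

def limCont (hq1 : ∀ s g, q s g ≤ 1)
    (hq2 : ∀ {s s' : Finset (ℕ × ℕ)} (h : s ⊆ s') (g : PatB s),
      q s g = ∑ g' ∈ fiberF h g, q s' g') : Content GX where
  toFun K := (lamF q ↑K).toNNReal
  mono' K K' h := ENNReal.toNNReal_mono (lamF_ne_top q hq1 _) (lamF_mono q h)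
  sup_disjoint' K K' hd _ _ := by
    show (lamF q ↑(K ⊔ K')).toNNReal = (lamF q ↑K).toNNReal + (lamF q ↑K').toNNReal
    have h : lamF q (↑(K ⊔ K') : Set GX) = lamF q ↑K + lamF q ↑K' := by
      rw [Compacts.coe_sup]
      exact lamF_sup_disjoint q @hq2 K.2 K'.2 hd
    rw [h]
    exact ENNReal.toNNReal_add (lamF_ne_top q hq1 _) (lamF_ne_top q hq1 _)
  sup_le' K K' := by
    show (lamF q ↑(K ⊔ K')).toNNReal ≤ (lamF q ↑K).toNNReal + (lamF q ↑K').toNNReal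
    have h : lamF q (↑(K ⊔ K') : Set GX) ≤ lamF q ↑K + lamF q ↑K' := by
      rw [Compacts.coe_sup]
      exact lamF_sup_le q @hq2 (↑K) (↑K')
    have h2 := ENNReal.toNNReal_mono
      (ENNReal.add_ne_top.mpr ⟨lamF_ne_top q hq1 _, lamF_ne_top q hq1 _⟩) h
    rwa [ENNReal.toNNReal_add (lamF_ne_top q hq1 _) (lamF_ne_top q hq1 _)] at h2

variable (hq1 : ∀ s g, q s g ≤ 1)
  (hq2 : ∀ {s s' : Finset (ℕ × ℕ)} (h : s ⊆ s') (g : PatB s),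
      q s g = ∑ g' ∈ fiberF h g, q s' g')

lemma limCont_coe (K : Compacts GX) :
    (limCont q hq1 @hq2 K : ℝ≥0∞) = lamF q ↑K :=
  ENNReal.coe_toNNReal (lamF_ne_top q hq1 _)

lemma limMeas_compact_open {S : Set GX} (hc : IsCompact S) (ho : IsOpen S) :
    (limCont q hq1 @hq2).measure S = lamF q S := by
  rw [Content.measure_apply _ ho.measurableSet, Content.outerMeasure_of_isOpen _ S ho,
    Content.innerContent_of_isCompact _ hc ho, limCont_coe]
  rfl

lemma limMeas_Cyl (s : Finset (ℕ × ℕ)) (g : PatB s) :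
    (limCont q hq1 @hq2).measure (Cyl s g) = q s g := by
  rw [limMeas_compact_open q hq1 @hq2 (isCompact_Cyl s g) (isOpen_Cyl s g),
    lamF_Cyl q @hq2 s g]

lemma limMeas_univ (hq3 : ∀ g : PatB ∅, q ∅ g = 1) :
    (limCont q hq1 @hq2).measure Set.univ = 1 := by
  rw [limMeas_compact_open q hq1 @hq2 isCompact_univ isOpen_univ, univ_eq_Cyl,
    lamF_Cyl q @hq2, hq3]

def Ygraph : Set GX := {x | (∀ i, x (i,i) = false) ∧ ∀ i j, x (i,j) = x (j,i)}

lemma isClosed_Ygraph : IsClosed Ygraph := by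
  have : Ygraph = (⋂ i : ℕ, {x : GX | x (i,i) = false})
      ∩ ⋂ i : ℕ, ⋂ j : ℕ, {x : GX | x (i,j) = x (j,i)} := by
    ext x; simp [Ygraph, Set.mem_iInter]
  rw [this]
  exact (isClosed_iInter fun i => isClosed_eq (continuous_apply _) continuous_const).inter
    (isClosed_iInter fun i => isClosed_iInter fun j =>
      isClosed_eq (continuous_apply _) (continuous_apply _))

lemma lamF_null_of_subset_compl
    (hq4 : ∀ (s : Finset (ℕ × ℕ)) (g : PatB s), Cyl s g ∩ Ygraph = ∅ → q s g = 0)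
    {K : Set GX} (hK : IsCompact K) (hKY : K ⊆ Ygraphᶜ) : lamF q K = 0 := by
  classical
  have hW : ∀ x ∈ K, ∃ w : Finset (ℕ × ℕ), ∀ y : GX, (∀ p ∈ w, y p = x p) → y ∉ Ygraph := by
    intro x hx
    have hxY : x ∉ Ygraph := hKY hx
    simp only [Ygraph, Set.mem_setOf_eq, not_and_or, not_forall] at hxY
    rcases hxY with ⟨i, hi⟩ | ⟨i, j, hij⟩
    · refine ⟨{(i,i)}, fun y hy hyY => hi ?_⟩
      rw [← hy (i,i) (Finset.mem_singleton_self _)]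
      exact hyY.1 i
    · refine ⟨{(i,j), (j,i)}, fun y hy hyY => hij ?_⟩
      have h1 := hy (i,j) (by simp)
      have h2 := hy (j,i) (by simp)
      rw [← h1, ← h2]
      exact hyY.2 i j
  choose w hw using hW
  have hopen : ∀ z : {x // x ∈ K}, IsOpen {y : GX | ∀ p ∈ w z.1 z.2, y p = z.1 p} := by
    intro z
    have : {y : GX | ∀ p ∈ w z.1 z.2, y p = z.1 p}
        = ⋂ p ∈ w z.1 z.2, {y : GX | y p = z.1 p} := by
      ext y; simp
    rw [this]
    refine isOpen_biInter_finset fun p _ => ?_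
    have : {y : GX | y p = z.1 p} = (fun y : GX => y p) ⁻¹' {z.1 p} := rfl
    rw [this]
    exact (isOpen_discrete _).preimage (continuous_apply p)
  have hcov : K ⊆ ⋃ z : {x // x ∈ K}, {y : GX | ∀ p ∈ w z.1 z.2, y p = z.1 p} :=
    fun x hx => Set.mem_iUnion.mpr ⟨⟨x, hx⟩, fun p _ => rfl⟩
  obtain ⟨t, ht⟩ := hK.elim_finite_subcover _ hopen hcov
  set s : Finset (ℕ × ℕ) := t.sup (fun z => w z.1 z.2) with hs
  refine le_antisymm ((lamF_le_patSum q s K).trans ?_) zero_le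
  show (∑ g ∈ imgF s K, q s g) ≤ 0
  have hzero : ∀ g ∈ imgF s K, q s g = 0 := by
    intro g hg
    obtain ⟨x, hx, rfl⟩ := mem_imgF.mp hg
    obtain ⟨z, hzt, hxz⟩ := Set.mem_iUnion₂.mp (ht hx)
    refine hq4 s _ ?_
    rw [Set.eq_empty_iff_forall_notMem]
    rintro y ⟨hyC, hyY⟩
    have hagree : ∀ p ∈ s, y p = x p := fun p hp => congrFun (mem_Cyl.mp hyC) ⟨p, hp⟩
    refine hw z.1 z.2 y (fun p hp => ?_) hyY
    have hps : p ∈ s := (Finset.le_sup (f := fun z : {x // x ∈ K} => w z.1 z.2) hzt) hp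
    rw [hagree p hps, hxz p hp]
  exact le_of_eq (Finset.sum_eq_zero hzero)

lemma limMeas_compl_Ygraph
    (hq4 : ∀ (s : Finset (ℕ × ℕ)) (g : PatB s), Cyl s g ∩ Ygraph = ∅ → q s g = 0) :
    (limCont q hq1 @hq2).measure Ygraphᶜ = 0 := by
  rw [Content.measure_apply _ isClosed_Ygraph.isOpen_compl.measurableSet,
    Content.outerMeasure_of_isOpen _ _ isClosed_Ygraph.isOpen_compl]
  refine le_antisymm ?_ zero_le
  refine iSup₂_le fun K hK => ?_
  have hK' : (K : Set GX) ⊆ Ygraphᶜ := hK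
  rw [limCont_coe q hq1 @hq2 K]
  exact le_of_eq (lamF_null_of_subset_compl q hq4 K.2 hK')

lemma pi_le_of_cylinders {ι : Type*} {π : ι → Type*} [m : ∀ i, MeasurableSpace (π i)]
    (m' : MeasurableSpace (∀ i, π i))
    (h : ∀ (i : ι) (s : Set (π i)), MeasurableSet[m i] s
      → MeasurableSet[m'] ((fun x => x i) ⁻¹' s)) :
    (MeasurableSpace.pi : MeasurableSpace (∀ i, π i)) ≤ m' := by
  refine iSup_le fun i => ?_
  intro S hS
  obtain ⟨s', hs', rfl⟩ := hS
  exact h i s' hs'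

/-! ### π-system of cylinders generating the σ-algebra of `GX` -/

def CylFam : Set (Set GX) := {S | ∃ s g, S = Cyl s g}

lemma isPiSystem_CylFam : IsPiSystem CylFam := by
  rintro S ⟨s, g, rfl⟩ T ⟨t, h, rfl⟩ hne
  obtain ⟨x, hxS, hxT⟩ := hne
  refine ⟨s ∪ t, rho (s ∪ t) x, ?_⟩
  ext y
  simp only [Set.mem_inter_iff, mem_Cyl]
  constructor
  · rintro ⟨h1, h2⟩
    funext p
    rcases Finset.mem_union.mp p.2 with hp | hp
    · exact (congrFun h1 ⟨p.1, hp⟩).trans (congrFun (mem_Cyl.mp hxS) ⟨p.1, hp⟩).symm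
    · exact (congrFun h2 ⟨p.1, hp⟩).trans (congrFun (mem_Cyl.mp hxT) ⟨p.1, hp⟩).symm
  · intro hagree
    have hag : ∀ p ∈ s ∪ t, y p = x p := fun p hp => congrFun hagree ⟨p, hp⟩
    constructor
    · rw [← mem_Cyl.mp hxS]
      funext p
      exact hag p.1 (Finset.mem_union_left _ p.2)
    · rw [← mem_Cyl.mp hxT]
      funext p
      exact hag p.1 (Finset.mem_union_right _ p.2)

lemma generateFrom_CylFam :
    (MeasurableSpace.pi : MeasurableSpace GX) = MeasurableSpace.generateFrom CylFam := by
  refine le_antisymm ?_ (MeasurableSpace.generateFrom_le ?_)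
  · refine pi_le_of_cylinders _ ?_
    intro p s' _
    have hset : (fun x : GX => x p) ⁻¹' s' = ⋃ b ∈ s', {x : GX | x p = b} := by
      ext x; simp
    rw [hset]
    refine MeasurableSet.biUnion s'.to_countable fun b _ => ?_
    have hb : {x : GX | x p = b} = Cyl {p} (fun _ => b) := by
      ext x
      simp only [Set.mem_setOf_eq, mem_Cyl, funext_iff]
      constructor
      · intro hx pp
        show x pp.1 = b
        rw [Finset.mem_singleton.mp pp.2]
        exact hx
      · intro hx
        exact hx ⟨p, Finset.mem_singleton_self p⟩
    rw [hb]
    exact measurableSet_generateFrom ⟨{p}, fun _ => b, rfl⟩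
  · rintro S ⟨s, g, rfl⟩
    exact measurableSet_Cyl s g

lemma measure_eq_of_eq_on_Cyl (ν₁ ν₂ : Measure GX) [IsProbabilityMeasure ν₁]
    [IsProbabilityMeasure ν₂] (h : ∀ s g, ν₁ (Cyl s g) = ν₂ (Cyl s g)) : ν₁ = ν₂ := by
  refine ext_of_generate_finite CylFam generateFrom_CylFam isPiSystem_CylFam ?_ ?_
  · rintro S ⟨s, g, rfl⟩
    exact h s g
  · simp [measure_univ]

/-! ### The permutation action on `GX` -/

def TX (τ : Equiv.Perm ℕ) (x : GX) : GX := fun p => x (τ.symm p.1, τ.symm p.2)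

lemma measurable_TX (τ : Equiv.Perm ℕ) : Measurable (TX τ) :=
  measurable_pi_iff.mpr fun _ => measurable_pi_apply _

def permF (τ : Equiv.Perm ℕ) (s : Finset (ℕ × ℕ)) : Finset (ℕ × ℕ) :=
  s.image (fun p => (τ.symm p.1, τ.symm p.2))

lemma permF_mem {τ : Equiv.Perm ℕ} {s : Finset (ℕ × ℕ)} (p : {p // p ∈ permF τ s}) :
    (τ p.1.1, τ p.1.2) ∈ s := by
  obtain ⟨p', hp', he⟩ := Finset.mem_image.mp p.2
  have h1 : τ p.1.1 = p'.1 := by rw [← he]; simp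
  have h2 : τ p.1.2 = p'.2 := by rw [← he]; simp
  rw [h1, h2]
  exact hp'

def permP (τ : Equiv.Perm ℕ) (s : Finset (ℕ × ℕ)) (g : PatB s) : PatB (permF τ s) :=
  fun p => g ⟨(τ p.1.1, τ p.1.2), permF_mem p⟩

lemma TX_preimage_Cyl (τ : Equiv.Perm ℕ) (s : Finset (ℕ × ℕ)) (g : PatB s) :
    TX τ ⁻¹' Cyl s g = Cyl (permF τ s) (permP τ s g) := by
  ext x
  simp only [Set.mem_preimage, mem_Cyl, funext_iff]
  constructor
  · intro h p
    have hm : (τ p.1.1, τ p.1.2) ∈ s := permF_mem p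
    have hh : (TX τ x) (τ p.1.1, τ p.1.2) = g ⟨(τ p.1.1, τ p.1.2), hm⟩ :=
      h ⟨(τ p.1.1, τ p.1.2), hm⟩
    show x p.1 = permP τ s g p
    have hx : x (τ.symm (τ p.1.1), τ.symm (τ p.1.2)) = x p.1 := by
      rw [Equiv.symm_apply_apply, Equiv.symm_apply_apply]
    rw [← hx]
    exact hh
  · intro h p
    have hm : (τ.symm p.1.1, τ.symm p.1.2) ∈ permF τ s :=
      Finset.mem_image.mpr ⟨p.1, p.2, rfl⟩
    have hh : x (τ.symm p.1.1, τ.symm p.1.2)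
        = g ⟨(τ (τ.symm p.1.1), τ (τ.symm p.1.2)), permF_mem ⟨_, hm⟩⟩ :=
      h ⟨(τ.symm p.1.1, τ.symm p.1.2), hm⟩
    show x (τ.symm p.1.1, τ.symm p.1.2) = g p
    rw [hh]
    congr 1
    refine Subtype.ext ?_
    show (τ (τ.symm p.1.1), τ (τ.symm p.1.2)) = p.1
    rw [Equiv.apply_symm_apply, Equiv.apply_symm_apply]

/-! ### Permutation action on graphs -/

lemma graphPermAct_inv_cancel (σ : Equiv.Perm ℕ) (H : SimpleGraph ℕ) :
    graphPermAct σ⁻¹ (graphPermAct σ H) = H := by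
  ext i j
  show H.Adj (σ.symm ((σ⁻¹).symm i)) (σ.symm ((σ⁻¹).symm j)) ↔ H.Adj i j
  simp [Equiv.Perm.inv_def]

lemma graphPermAct_image (E : Set (SimpleGraph ℕ)) (σ : Equiv.Perm ℕ) :
    graphPermAct σ '' E = graphPermAct σ⁻¹ ⁻¹' E := by
  ext H
  constructor
  · rintro ⟨K, hK, rfl⟩
    show graphPermAct σ⁻¹ (graphPermAct σ K) ∈ E
    rwa [graphPermAct_inv_cancel]
  · intro hH
    refine ⟨graphPermAct σ⁻¹ H, hH, ?_⟩
    have := graphPermAct_inv_cancel σ⁻¹ H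
    rwa [inv_inv] at this

lemma measurable_graphPermAct (τ : Equiv.Perm ℕ) : Measurable (graphPermAct τ) := by
  refine measurable_generateFrom ?_
  rintro E ⟨i, j, rfl⟩
  have : graphPermAct τ ⁻¹' graphEvent i j = graphEvent (τ.symm i) (τ.symm j) := rfl
  rw [this]
  exact measurableSet_graphEvent _ _

lemma permAct_gDec (τ : Equiv.Perm ℕ) (x : GX) :
    graphPermAct τ (gDec x) = gDec (TX τ x) := by
  ext i j
  show (τ.symm i ≠ τ.symm j ∧ x (τ.symm i, τ.symm j) = true ∧ x (τ.symm j, τ.symm i) = true)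
    ↔ (i ≠ j ∧ (TX τ x) (i, j) = true ∧ (TX τ x) (j, i) = true)
  have hne : τ.symm i ≠ τ.symm j ↔ i ≠ j := by
    constructor
    · intro h hij; exact h (by rw [hij])
    · intro h hij; exact h (τ.symm.injective hij)
  rw [hne]
  rfl

/-! ### Membership of encoded graphs in `Ygraph` -/

lemma gEnc_mem_Ygraph (G : SimpleGraph ℕ) : gEnc G ∈ Ygraph := by
  refine ⟨fun i => ?_, fun i j => ?_⟩
  · exact Bool.eq_false_iff.mpr fun h => G.irrefl (gEnc_apply_eq_true.mp h)
  · rw [Bool.eq_iff_iff,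
      gEnc_apply_eq_true (G := G) (p := (i, j)), gEnc_apply_eq_true (G := G) (p := (j, i))]
    exact ⟨fun h => G.adj_symm h, fun h => G.adj_symm h⟩

lemma gEnc_gDec_of_mem {x : GX} (hx : x ∈ Ygraph) : gEnc (gDec x) = x := by
  funext p
  obtain ⟨i, j⟩ := p
  cases hb : x (i, j)
  · refine Bool.eq_false_iff.mpr fun h => ?_
    obtain ⟨-, h2, -⟩ := gEnc_apply_eq_true.mp h
    rw [hb] at h2
    exact Bool.false_ne_true h2
  · refine gEnc_apply_eq_true.mpr ?_
    have hij : i ≠ j := by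
      intro he
      subst he
      rw [hx.1 i] at hb
      exact Bool.false_ne_true hb
    exact ⟨hij, hb, by rw [← hx.2 i j]; exact hb⟩

/-! ### The measures `Q m` -/

def QM {V : Type} (G : SimpleGraph V)
    (μ : @Measure (ℕ → V) (@MeasurableSpace.pi ℕ (fun _ => V) (fun _ => ⊤))) : Measure GX :=
  @Measure.map _ _ (@MeasurableSpace.pi ℕ (fun _ => V) (fun _ => ⊤)) _
    (fun x => gEnc (graphLift G x)) μ

lemma measurable_FQ {V : Type} [Fintype V] (G : SimpleGraph V) :
    @Measurable _ _ (@MeasurableSpace.pi ℕ (fun _ => V) (fun _ => ⊤)) _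
      (fun x => gEnc (graphLift G x)) :=
  @Measurable.comp _ _ _ (@MeasurableSpace.pi ℕ (fun _ => V) (fun _ => ⊤)) _ _ _ _
    measurable_gEnc (measurable_graphLift G)

lemma QM_apply {V : Type} [Fintype V] (G : SimpleGraph V)
    (μ : @Measure (ℕ → V) (@MeasurableSpace.pi ℕ (fun _ => V) (fun _ => ⊤)))
    {S : Set GX} (hS : MeasurableSet S) :
    QM G μ S = μ ((fun x => gEnc (graphLift G x)) ⁻¹' S) :=
  @Measure.map_apply _ _ (@MeasurableSpace.pi ℕ (fun _ => V) (fun _ => ⊤)) _ _ _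
    (measurable_FQ G) _ hS

lemma graphUnivMeasure_eq {V : Type} [Fintype V] (G : SimpleGraph V)
    (μ : @Measure (ℕ → V) (@MeasurableSpace.pi ℕ (fun _ => V) (fun _ => ⊤)))
    (s : Finset (ℕ × ℕ)) (T : Set (PatB s)) :
    graphUnivMeasure G μ (psi s ⁻¹' T) = QM G μ (rho s ⁻¹' T) := by
  rw [graphUnivMeasure,
    @Measure.map_apply _ _ (@MeasurableSpace.pi ℕ (fun _ => V) (fun _ => ⊤)) _ _ _
      (measurable_graphLift G) _ (measurable_psi_preimage s T),
    QM_apply G μ (measurableSet_rho_preimage s T)]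
  rfl

/-! ### Finite decomposition of regular events into atoms -/

lemma meas_psi_preimage (ρ : Measure (SimpleGraph ℕ)) (s : Finset (ℕ × ℕ)) (T : Set (PatB s)) :
    ρ (psi s ⁻¹' T) = ∑ g ∈ (Set.toFinite T).toFinset, ρ (AtomE s g) := by
  have hdec : psi s ⁻¹' T = ⋃ g ∈ (Set.toFinite T).toFinset, AtomE s g := by
    ext H
    simp [AtomE, Set.Finite.mem_toFinset]
  rw [hdec]
  refine measure_biUnion_finset ?_ fun g _ => measurableSet_atomE s g
  intro g _ g' _ hne
  refine Set.disjoint_left.mpr fun H hH hH' => hne ?_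
  rw [← Set.mem_singleton_iff.mp hH, ← Set.mem_singleton_iff.mp hH']

lemma meas_rho_preimage (ν : Measure GX) (s : Finset (ℕ × ℕ)) (T : Set (PatB s)) :
    ν (rho s ⁻¹' T) = ∑ g ∈ (Set.toFinite T).toFinset, ν (Cyl s g) := by
  have hdec : rho s ⁻¹' T = ⋃ g ∈ (Set.toFinite T).toFinset, Cyl s g := by
    ext x
    simp [Cyl, Set.Finite.mem_toFinset]
  rw [hdec]
  exact measure_biUnion_finset (pairwise_disjoint_Cyl s _) fun g _ => measurableSet_Cyl s g

/-! ### Representation of regular events -/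

lemma graphReg_rep {E : Set (SimpleGraph ℕ)} (h : E ∈ graphReg) :
    ∃ (s : Finset (ℕ × ℕ)) (T : Set (PatB s)), E = psi s ⁻¹' T := by
  obtain ⟨s, hs⟩ := h
  have hle : MeasurableSpace.generateFrom ((fun p : ℕ × ℕ => graphEvent p.1 p.2) '' ↑s)
      ≤ MeasurableSpace.comap (psi s) ⊤ := by
    refine MeasurableSpace.generateFrom_le ?_
    rintro _ ⟨p, hp, rfl⟩
    refine ⟨{g : PatB s | g ⟨p, hp⟩ = true}, trivial, ?_⟩
    ext H
    simp only [Set.mem_preimage, Set.mem_setOf_eq]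
    show gEnc H p = true ↔ H ∈ graphEvent p.1 p.2
    exact gEnc_apply_eq_true
  obtain ⟨T, -, hT⟩ := hle E hs
  exact ⟨s, T, hT.symm⟩

/-! ### Exchangeability of the sampling measures -/

lemma exchangeable {V : Type} [Fintype V] [Nonempty V] (μV : @Measure (ℕ → V)
      (@MeasurableSpace.pi ℕ (fun _ => V) (fun _ => ⊤)))
    (hμV : ∀ (s : Finset ℕ) (y : ℕ → V),
      μV {x | ∀ i ∈ s, x i = y i} = ((Fintype.card V : ℝ≥0∞))⁻¹ ^ s.card)
    (τ : Equiv.Perm ℕ) :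
    @Measure.map _ _ (@MeasurableSpace.pi ℕ (fun _ => V) (fun _ => ⊤))
      (@MeasurableSpace.pi ℕ (fun _ => V) (fun _ => ⊤))
      (fun x n => x (τ.symm n)) μV = μV := by
  classical
  letI : MeasurableSpace V := ⊤
  letI : MeasurableSingletonClass V := ⟨fun _ => MeasurableSpace.measurableSet_top⟩
  set CyF : Set (Set (ℕ → V)) := {S | ∃ (u : Finset ℕ) (y : ℕ → V), S = {x | ∀ i ∈ u, x i = y i}}
    with hCyF
  have hmeasCy : ∀ (u : Finset ℕ) (y : ℕ → V), MeasurableSet {x : ℕ → V | ∀ i ∈ u, x i = y i} := by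
    intro u y
    have : {x : ℕ → V | ∀ i ∈ u, x i = y i} = ⋂ i ∈ u, (fun x : ℕ → V => x i) ⁻¹' {y i} := by
      ext x; simp
    rw [this]
    exact MeasurableSet.biInter u.countable_toSet
      (fun i _ => (measurable_pi_apply i) (measurableSet_singleton _))
  have hgen : (MeasurableSpace.pi : MeasurableSpace (ℕ → V))
      = MeasurableSpace.generateFrom CyF := by
    refine le_antisymm ?_ (MeasurableSpace.generateFrom_le ?_)
    · refine pi_le_of_cylinders _ ?_
      intro i s' _
      have hset : (fun x : ℕ → V => x i) ⁻¹' s' = ⋃ v ∈ s', {x : ℕ → V | x i = v} := by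
        ext x; simp
      rw [hset]
      refine MeasurableSet.biUnion s'.to_countable fun v _ => ?_
      have hb : {x : ℕ → V | x i = v} = {x : ℕ → V | ∀ j ∈ ({i} : Finset ℕ), x j = v} := by
        ext x; simp
      rw [hb]
      exact measurableSet_generateFrom ⟨{i}, fun _ => v, rfl⟩
    · rintro S ⟨u, y, rfl⟩
      exact hmeasCy u y
  have hpi : IsPiSystem CyF := by
    rintro S ⟨u, y, rfl⟩ T ⟨u', y', rfl⟩ hne
    obtain ⟨x₀, hx₀S, hx₀T⟩ := hne
    refine ⟨u ∪ u', x₀, ?_⟩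
    ext z
    simp only [Set.mem_inter_iff, Set.mem_setOf_eq, Finset.mem_union]
    constructor
    · rintro ⟨h1, h2⟩ i hi
      rcases hi with hi | hi
      · rw [h1 i hi, ← hx₀S i hi]
      · rw [h2 i hi, ← hx₀T i hi]
    · intro h
      constructor
      · intro i hi
        rw [h i (Or.inl hi), hx₀S i hi]
      · intro i hi
        rw [h i (Or.inr hi), hx₀T i hi]
  have hmR : @Measurable _ _ (@MeasurableSpace.pi ℕ (fun _ => V) (fun _ => ⊤))
      (@MeasurableSpace.pi ℕ (fun _ => V) (fun _ => ⊤)) (fun x (n : ℕ) => x (τ.symm n)) :=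
    measurable_pi_iff.mpr fun n => measurable_pi_apply _
  have hprob : IsProbabilityMeasure μV := by
    constructor
    have h0 := hμV ∅ (fun _ => Classical.arbitrary V)
    · rw [show {x : ℕ → V | ∀ i ∈ (∅ : Finset ℕ), x i = (fun _ => Classical.arbitrary V) i}
        = Set.univ from by ext x; simp] at h0
      simpa using h0
  have hprob2 : IsProbabilityMeasure (@Measure.map _ _ (@MeasurableSpace.pi ℕ (fun _ => V)
      (fun _ => ⊤)) (@MeasurableSpace.pi ℕ (fun _ => V) (fun _ => ⊤))
      (fun x n => x (τ.symm n)) μV) :=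
    MeasureTheory.Measure.isProbabilityMeasure_map hmR.aemeasurable
  refine ext_of_generate_finite CyF hgen hpi ?_ ?_
  · rintro S ⟨u, y, rfl⟩
    rw [Measure.map_apply hmR (hmeasCy u y)]
    have hset : (fun x (n : ℕ) => x (τ.symm n)) ⁻¹' {x : ℕ → V | ∀ i ∈ u, x i = y i}
        = {x : ℕ → V | ∀ j ∈ u.image τ.symm, x j = y (τ j)} := by
      ext x
      simp only [Set.mem_preimage, Set.mem_setOf_eq, Finset.mem_image]
      constructor
      · rintro h j ⟨i, hi, rfl⟩
        rw [h i hi]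
        congr 1
        simp
      · intro h i hi
        have := h (τ.symm i) ⟨i, hi, rfl⟩
        rwa [Equiv.apply_symm_apply] at this
    rw [hset, hμV (u.image τ.symm) (fun n => y (τ n)), hμV u y,
      Finset.card_image_of_injective u τ.symm.injective]
  · simp [measure_univ]

end GraphCorr
end GraphCorrAux

open GraphCorr

/-- **The graph correspondence principle.**  Given finite graphs `G^(m) = (V^(m), E^(m))` and
the associated measures `P^(m)` on the graph universal space (pushforwards of i.i.d. uniform
vertex sampling), some subsequence of the `P^(m)` converges weakly (on regular events) to a
probability measure `P^(∞)` which is invariant under the permutation group `S_∞`. -/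
theorem graph_correspondence
    (V : ℕ → Type) [∀ m, Fintype (V m)] [∀ m, Nonempty (V m)]
    (G : ∀ m, SimpleGraph (V m))
    (μ : ∀ m, @Measure (ℕ → V m) (@MeasurableSpace.pi ℕ (fun _ => V m) (fun _ => ⊤)))
    (hμ : ∀ m (s : Finset ℕ) (y : ℕ → V m),
      μ m {x | ∀ i ∈ s, x i = y i} = ((Fintype.card (V m) : ℝ≥0∞))⁻¹ ^ s.card) :
    ∃ φ : ℕ → ℕ, StrictMono φ ∧ (∀ i, 0 < φ i) ∧
      ∃ Pinf : Measure (SimpleGraph ℕ), IsProbabilityMeasure Pinf ∧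
        (∀ E ∈ graphReg,
          Tendsto (fun i => graphUnivMeasure (G (φ i)) (μ (φ i)) E) atTop (nhds (Pinf E))) ∧
        (∀ E : Set (SimpleGraph ℕ), MeasurableSet E → ∀ σ : Equiv.Perm ℕ,
          Pinf (graphPermAct σ '' E) = Pinf E) := by
  classical
  have hprob : ∀ m, IsProbabilityMeasure (μ m) := by
    intro m
    constructor
    have h0 := hμ m ∅ (fun _ => Classical.arbitrary (V m))
    rw [show {x : ℕ → V m | ∀ i ∈ (∅ : Finset ℕ), x i = (fun _ => Classical.arbitrary (V m)) i}
        = Set.univ from by ext x; simp] at h0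
    simpa using h0
  have hQprob : ∀ m, IsProbabilityMeasure (QM (G m) (μ m)) := by
    intro m
    haveI := hprob m
    exact MeasureTheory.Measure.isProbabilityMeasure_map (measurable_FQ (G m)).aemeasurable
  let a : ℕ → (Σ s : Finset (ℕ × ℕ), PatB s) → ℝ≥0∞ :=
    fun i c => QM (G (i + 1)) (μ (i + 1)) (Cyl c.1 c.2)
  obtain ⟨Lf, φ0, hφ0, hconv⟩ := SeqCompactSpace.tendsto_subseq a
  have hpt : ∀ (s : Finset (ℕ × ℕ)) (g : PatB s),
      Tendsto (fun i => QM (G (φ0 i + 1)) (μ (φ0 i + 1)) (Cyl s g)) atTop (𝓝 (Lf ⟨s, g⟩)) := by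
    intro s g
    exact tendsto_pi_nhds.mp hconv ⟨s, g⟩
  set q : ∀ s : Finset (ℕ × ℕ), PatB s → ℝ≥0∞ := fun s g => Lf ⟨s, g⟩ with hqdef
  have hq1 : ∀ s g, q s g ≤ 1 := by
    intro s g
    refine le_of_tendsto (hpt s g) (Filter.Eventually.of_forall fun i => ?_)
    haveI := hQprob (φ0 i + 1)
    exact prob_le_one
  have hq2 : ∀ {s s' : Finset (ℕ × ℕ)} (h : s ⊆ s') (g : PatB s),
      q s g = ∑ g' ∈ fiberF h g, q s' g' := by
    intro s s' h g
    refine tendsto_nhds_unique (hpt s g) ?_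
    have he : (fun i => QM (G (φ0 i + 1)) (μ (φ0 i + 1)) (Cyl s g))
        = fun i => ∑ g' ∈ fiberF h g, QM (G (φ0 i + 1)) (μ (φ0 i + 1)) (Cyl s' g') := by
      funext i
      exact meas_Cyl_sum _ h g measurableSet_Cyl
    rw [he]
    exact tendsto_finset_sum _ fun g' _ => hpt s' g'
  have hq3 : ∀ g : PatB ∅, q ∅ g = 1 := by
    intro g
    refine tendsto_nhds_unique (hpt ∅ g) ?_
    have he : (fun i => QM (G (φ0 i + 1)) (μ (φ0 i + 1)) (Cyl ∅ g)) = fun _ => (1 : ℝ≥0∞) := by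
      funext i
      have huniv : Cyl ∅ g = Set.univ := by
        rw [univ_eq_Cyl]
        exact congrArg (Cyl ∅) (Subsingleton.elim _ _)
      haveI := hQprob (φ0 i + 1)
      rw [huniv]
      exact measure_univ
    rw [he]
    exact tendsto_const_nhds
  have hq4 : ∀ (s : Finset (ℕ × ℕ)) (g : PatB s), Cyl s g ∩ Ygraph = ∅ → q s g = 0 := by
    intro s g hempty
    refine tendsto_nhds_unique (hpt s g) ?_
    have he : (fun i => QM (G (φ0 i + 1)) (μ (φ0 i + 1)) (Cyl s g)) = fun _ => (0 : ℝ≥0∞) := by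
      funext i
      rw [QM_apply (G (φ0 i + 1)) (μ (φ0 i + 1)) (measurableSet_Cyl s g)]
      have hpre : (fun x => gEnc (graphLift (G (φ0 i + 1)) x)) ⁻¹' (Cyl s g) = ∅ := by
        rw [Set.eq_empty_iff_forall_notMem]
        intro x hx
        have hmem : gEnc (graphLift (G (φ0 i + 1)) x) ∈ Cyl s g ∩ Ygraph :=
          ⟨hx, gEnc_mem_Ygraph _⟩
        rw [hempty] at hmem
        exact hmem
      rw [hpre]
      exact measure_empty
    rw [he]
    exact tendsto_const_nhds
  set ν : Measure GX := (limCont q hq1 @hq2).measure with hν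
  have hνCyl : ∀ s g, ν (Cyl s g) = q s g := fun s g => limMeas_Cyl q hq1 @hq2 s g
  have hνuniv : ν Set.univ = 1 := limMeas_univ q hq1 @hq2 hq3
  haveI hνprob : IsProbabilityMeasure ν := ⟨hνuniv⟩
  have hνY : ν Ygraphᶜ = 0 := limMeas_compl_Ygraph q hq1 @hq2 hq4
  set Pinf : Measure (SimpleGraph ℕ) := ν.map gDec with hPinf
  haveI hPprob : IsProbabilityMeasure Pinf :=
    MeasureTheory.Measure.isProbabilityMeasure_map measurable_gDec.aemeasurable
  have hinter : ∀ B : Set GX, ν (B ∩ Ygraph) = ν B := by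
    intro B
    refine le_antisymm (measure_mono Set.inter_subset_left) ?_
    calc ν B ≤ ν ((B ∩ Ygraph) ∪ Ygraphᶜ) := by
          refine measure_mono fun x hx => ?_
          by_cases h : x ∈ Ygraph
          · exact Or.inl ⟨hx, h⟩
          · exact Or.inr h
      _ ≤ ν (B ∩ Ygraph) + ν Ygraphᶜ := measure_union_le _ _
      _ = ν (B ∩ Ygraph) := by rw [hνY, add_zero]
  have hPatom : ∀ s g, Pinf (AtomE s g) = q s g := by
    intro s g
    rw [hPinf, Measure.map_apply measurable_gDec (measurableSet_atomE s g)]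
    have hset : gDec ⁻¹' (AtomE s g) ∩ Ygraph = Cyl s g ∩ Ygraph := by
      ext x
      simp only [Set.mem_inter_iff, Set.mem_preimage, AtomE, Set.mem_singleton_iff, mem_Cyl]
      constructor
      · rintro ⟨h1, h2⟩
        refine ⟨?_, h2⟩
        have hpsi : rho s (gEnc (gDec x)) = g := h1
        rwa [gEnc_gDec_of_mem h2] at hpsi
      · rintro ⟨h1, h2⟩
        refine ⟨?_, h2⟩
        show rho s (gEnc (gDec x)) = g
        rwa [gEnc_gDec_of_mem h2]
    calc ν (gDec ⁻¹' AtomE s g) = ν (gDec ⁻¹' AtomE s g ∩ Ygraph) := (hinter _).symm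
      _ = ν (Cyl s g ∩ Ygraph) := by rw [hset]
      _ = ν (Cyl s g) := hinter _
      _ = q s g := hνCyl s g
  refine ⟨fun i => φ0 i + 1, fun a b h => Nat.add_lt_add_right (hφ0 h) 1,
    fun i => Nat.succ_pos _, Pinf, hPprob, ?_, ?_⟩
  · intro E hE
    obtain ⟨s, T, rfl⟩ := graphReg_rep hE
    have hGU : (fun i => graphUnivMeasure (G (φ0 i + 1)) (μ (φ0 i + 1)) (psi s ⁻¹' T))
        = fun i => ∑ g ∈ (Set.toFinite T).toFinset,
            QM (G (φ0 i + 1)) (μ (φ0 i + 1)) (Cyl s g) := by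
      funext i
      rw [graphUnivMeasure_eq (G (φ0 i + 1)) (μ (φ0 i + 1)) s T]
      exact meas_rho_preimage _ s T
    rw [hGU]
    have hPv : Pinf (psi s ⁻¹' T) = ∑ g ∈ (Set.toFinite T).toFinset, q s g := by
      rw [meas_psi_preimage Pinf s T]
      exact Finset.sum_congr rfl fun g _ => hPatom s g
    rw [hPv]
    exact tendsto_finset_sum _ fun g _ => hpt s g
  · intro E hE σ
    have hmapν : ∀ τ : Equiv.Perm ℕ, ν.map (TX τ) = ν := by
      intro τ
      haveI : IsProbabilityMeasure (ν.map (TX τ)) :=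
        MeasureTheory.Measure.isProbabilityMeasure_map (measurable_TX τ).aemeasurable
      refine measure_eq_of_eq_on_Cyl _ _ ?_
      intro s g
      rw [Measure.map_apply (measurable_TX τ) (measurableSet_Cyl s g), TX_preimage_Cyl τ s g,
        hνCyl, hνCyl]
      refine tendsto_nhds_unique (hpt _ _) ?_
      have he : (fun i => QM (G (φ0 i + 1)) (μ (φ0 i + 1)) (Cyl (permF τ s) (permP τ s g)))
          = fun i => QM (G (φ0 i + 1)) (μ (φ0 i + 1)) (Cyl s g) := by
        funext i
        rw [QM_apply _ _ (measurableSet_Cyl _ _), QM_apply _ _ (measurableSet_Cyl s g),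
          ← TX_preimage_Cyl τ s g]
        have hcomp : (fun x => gEnc (graphLift (G (φ0 i + 1)) x)) ⁻¹' (TX τ ⁻¹' Cyl s g)
            = (fun x (n : ℕ) => x (τ.symm n)) ⁻¹'
              ((fun x => gEnc (graphLift (G (φ0 i + 1)) x)) ⁻¹' (Cyl s g)) := rfl
        rw [hcomp]
        have hD := (measurable_FQ (G (φ0 i + 1))) (measurableSet_Cyl s g)
        have hmR : @Measurable _ _ (@MeasurableSpace.pi ℕ (fun _ => V (φ0 i + 1)) (fun _ => ⊤))
            (@MeasurableSpace.pi ℕ (fun _ => V (φ0 i + 1)) (fun _ => ⊤))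
            (fun x (n : ℕ) => x (τ.symm n)) := by
          letI : MeasurableSpace (V (φ0 i + 1)) := ⊤
          exact measurable_pi_iff.mpr fun n => measurable_pi_apply _
        rw [← @Measure.map_apply _ _ (@MeasurableSpace.pi ℕ (fun _ => V (φ0 i + 1)) (fun _ => ⊤))
            (@MeasurableSpace.pi ℕ (fun _ => V (φ0 i + 1)) (fun _ => ⊤))
            (μ (φ0 i + 1)) (fun x (n : ℕ) => x (τ.symm n)) hmR _ hD,
          exchangeable (μ (φ0 i + 1)) (hμ (φ0 i + 1)) τ]
      rw [he]
      exact hpt s g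
    rw [graphPermAct_image E σ]
    calc Pinf (graphPermAct σ⁻¹ ⁻¹' E)
        = ν (gDec ⁻¹' (graphPermAct σ⁻¹ ⁻¹' E)) := by
          rw [hPinf]
          exact Measure.map_apply measurable_gDec ((measurable_graphPermAct σ⁻¹) hE)
      _ = ν (TX σ⁻¹ ⁻¹' (gDec ⁻¹' E)) := by
          congr 1
          ext x
          simp only [Set.mem_preimage]
          rw [permAct_gDec]
      _ = (ν.map (TX σ⁻¹)) (gDec ⁻¹' E) :=
          (Measure.map_apply (measurable_TX σ⁻¹) (measurable_gDec hE)).symm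
      _ = ν (gDec ⁻¹' E) := by rw [hmapν σ⁻¹]
      _ = Pinf E := by
          rw [hPinf]
          exact (Measure.map_apply measurable_gDec hE).symm
end

section
/- For every ε > 0 there exists δ > 0 such that the following holds for every n ≥ 1: if G = (V, E) is an undirected graph with |V| = n vertices containing at most δ·n³ triangles, in the sense that |{ (x_1,x_2,x_3) ∈ V³ : {x_1,x_2}, {x_2,x_3}, {x_3,x_1} ∈ E }| ≤ δ·n³, then one can delete at most ε·n² edges from G to obtain a subgraph G' which contains no triangles at all, i.e. there is no triple of vertices x_1, x_2, x_3 with {x_1,x_2}, {x_2,x_3}, {x_3,x_1} all edges of G'. -/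
/-- **Triangle removal lemma** (Ruzsa–Szemerédi).  For every `ε > 0` there is `δ > 0` such
that for every `n ≥ 1` and every graph `G` on `n` vertices with at most `δ·n³` triangles
(counted as ordered triples `(x₁,x₂,x₃) ∈ V³` with `{x₁,x₂}, {x₂,x₃}, {x₃,x₁} ∈ E`), one may
delete at most `ε·n²` edges from `G` to obtain a subgraph `G'` with no triangles at all. -/
theorem triangle_removal :
    ∀ ε : ℝ, 0 < ε → ∃ δ : ℝ, 0 < δ ∧
      ∀ n : ℕ, 1 ≤ n → ∀ (V : Type) [Fintype V], Fintype.card V = n →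
        ∀ G : SimpleGraph V,
          (Nat.card {t : V × V × V |
              G.Adj t.1 t.2.1 ∧ G.Adj t.2.1 t.2.2 ∧ G.Adj t.2.2 t.1} : ℝ) ≤ δ * n ^ 3 →
          ∃ G' : SimpleGraph V, G' ≤ G ∧
            (Nat.card (G.edgeSet \ G'.edgeSet : Set (Sym2 V)) : ℝ) ≤ ε * n ^ 2 ∧
            ∀ x y z : V, ¬(G'.Adj x y ∧ G'.Adj y z ∧ G'.Adj z x) := by
  intro ε hε
  set ε' : ℝ := min ε 1 with hε'def
  have hε' : 0 < ε' := lt_min hε one_pos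
  have hε'1 : ε' ≤ 1 := min_le_right _ _
  refine ⟨SimpleGraph.triangleRemovalBound ε' / 2,
    by have := SimpleGraph.triangleRemovalBound_pos hε'; linarith, ?_⟩
  intro n hn V _ hcard G hfew
  classical
  set T : Set (V × V × V) :=
    {t : V × V × V | G.Adj t.1 t.2.1 ∧ G.Adj t.2.1 t.2.2 ∧ G.Adj t.2.2 t.1} with hT
  -- cliques inject into ordered triangles
  have hH : ∀ s : {s // s ∈ G.cliqueFinset 3}, ∃ t : V × V × V,
      t ∈ T ∧ (s : Finset V) = {t.1, t.2.1, t.2.2} := by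
    rintro ⟨s, hs⟩
    rw [SimpleGraph.mem_cliqueFinset_iff, SimpleGraph.is3Clique_iff] at hs
    obtain ⟨a, b, c, hab, hac, hbc, rfl⟩ := hs
    exact ⟨(a, b, c), ⟨hab, hbc, hac.symm⟩, rfl⟩
  have hinj : Function.Injective fun s : {s // s ∈ G.cliqueFinset 3} =>
      (⟨(hH s).choose, (hH s).choose_spec.1⟩ : T) := by
    intro s s' h
    have h1 := (hH s).choose_spec.2
    have h2 := (hH s').choose_spec.2
    ext1
    rw [h1, h2]
    have : (hH s).choose = (hH s').choose := congrArg Subtype.val h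
    rw [this]
  have hle : ((G.cliqueFinset 3).card : ℝ) ≤ Nat.card T := by
    have := Nat.card_le_card_of_injective _ hinj
    rw [Nat.card_eq_finsetCard] at this
    exact_mod_cast this
  have hn3 : (0 : ℝ) < (n : ℝ) ^ 3 := by positivity
  have hbig : (G.cliqueFinset 3).card <
      SimpleGraph.triangleRemovalBound ε' * Fintype.card V ^ 3 := by
    rw [hcard]
    have h2 : ((G.cliqueFinset 3).card : ℝ) ≤ SimpleGraph.triangleRemovalBound ε' / 2 * n ^ 3 :=
      hle.trans hfew
    have := SimpleGraph.triangleRemovalBound_pos hε'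
    nlinarith
  obtain ⟨G', hG'le, _, hcount, hfree⟩ := SimpleGraph.triangle_removal hbig
  refine ⟨G', hG'le, ?_, ?_⟩
  · have hsub : G'.edgeSet ⊆ G.edgeSet := SimpleGraph.edgeSet_mono hG'le
    have hdiff : Nat.card (G.edgeSet \ G'.edgeSet : Set (Sym2 V))
        = G.edgeFinset.card - G'.edgeFinset.card := by
      rw [Nat.card_coe_set_eq, Set.ncard_diff hsub (Set.toFinite _),
        Set.ncard_eq_toFinset_card', Set.ncard_eq_toFinset_card']
      congr 1 <;> exact Finset.ext (by simp)

    have hfin : G'.edgeFinset.card ≤ G.edgeFinset.card :=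
      Finset.card_le_card (by simpa using hsub)
    have hεle : ε' * (Fintype.card V ^ 2 : ℕ) ≤ ε * n ^ 2 := by
      rw [hcard]
      push_cast
      have : (0:ℝ) ≤ (n:ℝ)^2 := by positivity
      exact mul_le_mul_of_nonneg_right (min_le_left _ _) this
    rw [hdiff]
    calc ((G.edgeFinset.card - G'.edgeFinset.card : ℕ) : ℝ)
        = (G.edgeFinset.card : ℝ) - G'.edgeFinset.card := by
          rw [Nat.cast_sub hfin]
      _ ≤ ε' * (Fintype.card V ^ 2 : ℕ) := hcount.le
      _ ≤ ε * n ^ 2 := hεle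
  · rintro x y z ⟨hxy, hyz, hzx⟩
    exact hfree {x, y, z} (SimpleGraph.is3Clique_triple_iff.2 ⟨hxy, hzx.symm, hyz⟩)
end

section
/- For every ε > 0 there exist δ > 0 and a positive integer M such that the following holds for every n ≥ 1: if G = (V, E) is an undirected graph with |V| = n vertices containing at most δ·n³ triangles (i.e. |{ (x_1,x_2,x_3) ∈ V³ : {x_1,x_2}, {x_2,x_3}, {x_3,x_1} ∈ E }| ≤ δ·n³), then there exists a triangle-free graph G' = (V, E') (not necessarily a subgraph of G) with |E \ E'| ≤ ε·n², together with a partition of V into at most M parts, such that for any two (not necessarily distinct) parts of the partition, the restriction of G' to the pairs of vertices joining these two parts is either the complete bipartite/complete graph on those pairs or the empty graph on those pairs. -/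
open Finset Fintype Nat SzemerediRegularity SimpleGraph

namespace StrongRemovalAux

variable {α : Type*} [DecidableEq α] [Fintype α] {G : SimpleGraph α} [DecidableRel G.Adj]
  {s : Finset α} {P : Finpartition (univ : Finset α)} {ε : ℝ}

lemma aux' {n k : ℕ} (hk : 0 < k) (hn : k ≤ n) : n < 2 * k * (n / k) := by
  rw [mul_assoc, two_mul, ← add_lt_add_iff_right (n % k), add_right_comm, add_assoc,
    Nat.mod_add_div n k, add_comm, add_lt_add_iff_right]
  apply (Nat.mod_lt n hk).trans_le
  simpa using Nat.mul_le_mul_left k ((Nat.one_le_div_iff hk).2 hn)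

lemma card_bound' (hP₁ : P.IsEquipartition) (hP₃ : #P.parts ≤ bound (ε / 8) ⌈4/ε⌉₊)
    (hX : s ∈ P.parts) : card α / (2 * bound (ε / 8) ⌈4 / ε⌉₊ : ℝ) ≤ #s := by
  cases isEmpty_or_nonempty α
  · simp [Fintype.card_eq_zero]
  have := Finset.Nonempty.card_pos ⟨_, hX⟩
  calc
    _ ≤ card α / (2 * #P.parts : ℝ) := by gcongr
    _ ≤ ↑(card α / #P.parts) :=
      (div_le_iff₀' (by positivity)).2 <| mod_cast (aux' ‹_› P.card_parts_le_card).le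
    _ ≤ (#s : ℝ) := mod_cast hP₁.average_le_card_part hX

/-- The blow-up graph associated to a regularity partition. -/
def redGraph (G : SimpleGraph α) [DecidableRel G.Adj] (P : Finpartition (univ : Finset α))
    (ε δ : ℝ) : SimpleGraph α where
  Adj a b := a ≠ b ∧ ∃ U ∈ P.parts, ∃ V ∈ P.parts,
      a ∈ U ∧ b ∈ V ∧ U ≠ V ∧ G.IsUniform ε U V ∧ δ ≤ G.edgeDensity U V
  symm := ⟨by
    rintro a b ⟨hab, U, UP, V, VP, xU, yV, UV, GUV, εUV⟩
    exact ⟨hab.symm, V, VP, U, UP, yV, xU, UV.symm, GUV.symm, by rwa [edgeDensity_comm]⟩⟩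
  loopless := ⟨fun a h => h.1 rfl⟩

lemma regularityReduced_le_redGraph {δ : ℝ} :
    G.regularityReduced P ε δ ≤ redGraph G P ε δ := by
  rintro a b ⟨hab, h⟩
  exact ⟨hab.ne, h⟩

lemma redGraph_triangleFree (hε : 0 < ε) (hP₁ : P.IsEquipartition)
    (hP₃ : #P.parts ≤ bound (ε/8) ⌈4/ε⌉₊) (hε1 : ε ≤ 1)
    (hcount : (#(G.cliqueFinset 3) : ℝ) < triangleRemovalBound ε * card α ^ 3) :
    ∀ x y z : α, ¬((redGraph G P (ε/8) (ε/4)).Adj x y ∧ (redGraph G P (ε/8) (ε/4)).Adj y z ∧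
      (redGraph G P (ε/8) (ε/4)).Adj z x) := by
  rintro x y z ⟨⟨-, X, hX, Y, hY, xX, yY, nXY, uXY, dXY⟩,
    ⟨-, Y', hY', Z, hZ, yY', zZ, nYZ, uYZ, dYZ⟩,
    ⟨-, Z', hZ', X', hX', zZ', xX', nZX, uZX, dZX⟩⟩
  cases P.eq_of_mem_parts hY' hY yY' yY
  cases P.eq_of_mem_parts hZ' hZ zZ' zZ
  cases P.eq_of_mem_parts hX' hX xX' xX
  have dXY' := P.disjoint hX hY nXY
  have dXZ' := P.disjoint hX hZ (Ne.symm nZX)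
  have dYZ' := P.disjoint hY hZ nYZ
  have that : 2 * (ε/8) = ε/4 := by ring
  have h0 : 0 ≤ 1 - 2 * (ε / 8) := by
    have : ε / 4 ≤ 1 := dXY.trans (by exact_mod_cast G.edgeDensity_le_one _ _)
    linarith
  refine hcount.not_ge ?_
  calc
    (triangleRemovalBound ε * card α ^ 3 : ℝ)
        ≤ (1 - ε/4) * (ε/(16 * bound (ε/8) ⌈4/ε⌉₊))^3 * card α ^ 3 := by
      gcongr; rw [triangleRemovalBound, min_eq_right hε1]; exact min_le_right _ _
    _ = (1 - 2 * (ε / 8)) * (ε / 8) ^ 3 * (card α / (2 * bound (ε / 8) ⌈4 / ε⌉₊)) *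
          (card α / (2 * bound (ε / 8) ⌈4 / ε⌉₊)) * (card α / (2 * bound (ε / 8) ⌈4 / ε⌉₊)) := by
      ring
    _ ≤ (1 - 2 * (ε / 8)) * (ε / 8) ^ 3 * #X * #Y * #Z := by
      gcongr <;> exact card_bound' hP₁ hP₃ ‹_›
    _ ≤ _ := by
      rw [edgeDensity_comm] at dZX
      exact triangle_counting G (by rwa [that]) uXY dXY' (by rwa [that]) uZX.symm dXZ'
        (by rwa [that]) uYZ dYZ'

lemma clique_le_triples (G : SimpleGraph α) [DecidableRel G.Adj] :
    #(G.cliqueFinset 3) ≤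
      Nat.card {t : α × α × α | G.Adj t.1 t.2.1 ∧ G.Adj t.2.1 t.2.2 ∧ G.Adj t.2.2 t.1} := by
  classical
  set S : Set (α × α × α) :=
    {t : α × α × α | G.Adj t.1 t.2.1 ∧ G.Adj t.2.1 t.2.2 ∧ G.Adj t.2.2 t.1} with hS
  rcases isEmpty_or_nonempty α with hα | hα
  · refine le_trans (le_of_eq (Finset.card_eq_zero.2
      (Finset.eq_empty_of_forall_notMem fun s hs => ?_))) (Nat.zero_le _)
    have h3 := (SimpleGraph.mem_cliqueFinset_iff.1 hs).card_eq
    obtain ⟨a, -⟩ := Finset.card_pos.1 (by rw [h3]; norm_num)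
    exact hα.false a
  inhabit α
  rw [Nat.card_coe_set_eq, Set.ncard_eq_toFinset_card']
  have key : ∀ s ∈ G.cliqueFinset 3, ∃ a b c, G.Adj a b ∧ G.Adj a c ∧ G.Adj b c ∧
      s = {a, b, c} := fun s hs => is3Clique_iff.1 (SimpleGraph.mem_cliqueFinset_iff.1 hs)
  choose f g h hab hac hbc heq using key
  refine Finset.card_le_card_of_injOn
    (fun s => if hs : s ∈ G.cliqueFinset 3 then (f s hs, g s hs, h s hs) else default) ?_ ?_
  · intro s hs
    simp only [Finset.mem_coe, Set.mem_toFinset, hS, Set.mem_setOf_eq, dif_pos (Finset.mem_coe.1 hs)]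
    exact ⟨hab s hs, hbc s hs, (hac s hs).symm⟩
  · intro s hs t ht hst
    have hs' : s ∈ G.cliqueFinset 3 := hs
    have ht' : t ∈ G.cliqueFinset 3 := ht
    simp only [dif_pos hs', dif_pos ht', Prod.mk.injEq] at hst
    rw [heq s hs', heq t ht', hst.1, hst.2.1, hst.2.2]


lemma natCard_sdiff_le (G H K : SimpleGraph α) [DecidableRel G.Adj] [DecidableRel K.Adj]
    (hKH : K ≤ H) (hKG : K ≤ G) :
    (Nat.card (G.edgeSet \ H.edgeSet : Set (Sym2 α)) : ℝ) ≤ #G.edgeFinset - #K.edgeFinset := by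
  have hsub : K.edgeFinset ⊆ G.edgeFinset := edgeFinset_mono hKG
  have h1 : (G.edgeSet \ H.edgeSet : Set (Sym2 α)).ncard ≤
      ((G.edgeFinset \ K.edgeFinset : Finset (Sym2 α)) : Set (Sym2 α)).ncard := by
    apply Set.ncard_le_ncard _ (Set.toFinite _)
    intro e he
    simp only [Finset.coe_sdiff, Set.mem_diff, Finset.mem_coe, mem_edgeFinset]
    exact ⟨he.1, fun h => he.2 (edgeSet_mono hKH h)⟩
  rw [Nat.card_coe_set_eq]
  have h2 : ((G.edgeFinset \ K.edgeFinset : Finset (Sym2 α)) : Set (Sym2 α)).ncard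
      = #(G.edgeFinset \ K.edgeFinset) := Set.ncard_coe_finset _
  have h3 : #(G.edgeFinset \ K.edgeFinset) = #G.edgeFinset - #K.edgeFinset :=
    Finset.card_sdiff_of_subset hsub
  calc ((G.edgeSet \ H.edgeSet : Set (Sym2 α)).ncard : ℝ)
      ≤ ((#G.edgeFinset - #K.edgeFinset : ℕ) : ℝ) := by
        exact_mod_cast h1.trans_eq (h2.trans h3)
    _ = _ := by rw [Nat.cast_sub (Finset.card_le_card hsub)]

end StrongRemovalAux


/-- **Strong triangle removal lemma.**  For every `ε > 0` there exist `δ > 0` and `M ≥ 1`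
such that for every `n ≥ 1` and every graph `G` on `n` vertices with at most `δ·n³`
triangles, there is a triangle-free graph `G'` (not necessarily a subgraph of `G`) with
`|E \ E'| ≤ ε·n²`, together with a partition of `V` into at most `M` parts such that,
between any two (not necessarily distinct) parts, `G'` is either complete or empty. -/
theorem strong_triangle_removal :
    ∀ ε : ℝ, 0 < ε → ∃ δ : ℝ, 0 < δ ∧ ∃ M : ℕ, 0 < M ∧
      ∀ n : ℕ, 1 ≤ n → ∀ (V : Type) [Fintype V], Fintype.card V = n →
        ∀ G : SimpleGraph V,
          (Nat.card {t : V × V × V |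
              G.Adj t.1 t.2.1 ∧ G.Adj t.2.1 t.2.2 ∧ G.Adj t.2.2 t.1} : ℝ) ≤ δ * n ^ 3 →
          ∃ G' : SimpleGraph V,
            (∀ x y z : V, ¬(G'.Adj x y ∧ G'.Adj y z ∧ G'.Adj z x)) ∧
            (Nat.card (G.edgeSet \ G'.edgeSet : Set (Sym2 V)) : ℝ) ≤ ε * n ^ 2 ∧
            ∃ c : V → Fin M, ∀ p q : Fin M,
              (∀ x y : V, x ≠ y → c x = p → c y = q → G'.Adj x y) ∨
              (∀ x y : V, c x = p → c y = q → ¬G'.Adj x y) := by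
  intro ε hε
  classical
  set ε' : ℝ := min ε 1 with hε'def
  have hε'0 : 0 < ε' := lt_min hε one_pos
  have hε'1 : ε' ≤ 1 := min_le_right _ _
  have hε'ε : ε' ≤ ε := min_le_left _ _
  have hδ : 0 < triangleRemovalBound ε' := triangleRemovalBound_pos hε'0
  set l : ℕ := ⌈4/ε'⌉₊ with hldef
  set M : ℕ := max l (bound (ε'/8) l) with hMdef
  have hM : 0 < M := lt_of_lt_of_le (bound_pos _ _) (le_max_right _ _)
  refine ⟨triangleRemovalBound ε' / 2, by positivity, M, hM, ?_⟩
  intro n hn V _ hcard G htri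
  haveI : DecidableEq V := Classical.decEq V
  haveI : DecidableRel G.Adj := Classical.decRel _
  subst hcard
  have hn3 : (0:ℝ) < (card V : ℝ) ^ 3 := by
    have h1 : (1:ℝ) ≤ (card V : ℝ) := by exact_mod_cast hn
    positivity
  have hclique : (#(G.cliqueFinset 3) : ℝ) < triangleRemovalBound ε' * (card V : ℝ) ^ 3 := by
    have h1 : (#(G.cliqueFinset 3) : ℝ) ≤ triangleRemovalBound ε' / 2 * (card V : ℝ) ^ 3 :=
      le_trans (by exact_mod_cast StrongRemovalAux.clique_le_triples G) htri
    nlinarith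
  rcases le_or_gt l (card V) with hl' | hl'
  · -- large case: regularity
    haveI : Nonempty V := Fintype.card_pos_iff.1 (by omega)
    obtain ⟨P, hP₁, hP₂, hP₃, hP₄⟩ := szemeredi_regularity G (by positivity : (0:ℝ) < ε'/8) hl'
    set G' := StrongRemovalAux.redGraph G P (ε'/8) (ε'/4) with hG'def
    refine ⟨G', StrongRemovalAux.redGraph_triangleFree hε'0 hP₁ hP₃ hε'1 hclique, ?_, ?_⟩
    · have hP' : 4/ε' ≤ (#P.parts : ℝ) := le_trans (Nat.le_ceil _) (Nat.cast_le.2 hP₂)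
      have hkey := SimpleGraph.regularityReduced_edges_card_aux hε'0 hP₁ hP₄ hP'
      have h2 := StrongRemovalAux.natCard_sdiff_le G G' (G.regularityReduced P (ε'/8) (ε'/4))
        StrongRemovalAux.regularityReduced_le_redGraph regularityReduced_le
      have hε2 : ε' * (card V:ℝ)^2 ≤ ε * (card V:ℝ)^2 := by gcongr
      push_cast at hkey
      linarith
    · have hparts : Fintype.card {s // s ∈ P.parts} ≤ Fintype.card (Fin M) := by
        rw [Fintype.card_coe, Fintype.card_fin]
        exact hP₃.trans (le_max_right _ _)
      obtain ⟨ι⟩ := Function.Embedding.nonempty_of_card_le hparts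
      refine ⟨fun v => ι ⟨P.part v, P.part_mem.2 (Finset.mem_univ v)⟩, ?_⟩
      intro p q
      by_cases hp : ∃ U : {s // s ∈ P.parts}, ι U = p
      swap
      · exact Or.inr fun x y hx hy _ => hp ⟨⟨P.part x, P.part_mem.2 (Finset.mem_univ x)⟩, hx⟩
      by_cases hq : ∃ U : {s // s ∈ P.parts}, ι U = q
      swap
      · exact Or.inr fun x y hx hy _ => hq ⟨⟨P.part y, P.part_mem.2 (Finset.mem_univ y)⟩, hy⟩
      obtain ⟨U, hU⟩ := hp
      obtain ⟨W, hW⟩ := hq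
      have hcp : ∀ x : V, ι ⟨P.part x, P.part_mem.2 (Finset.mem_univ x)⟩ = p → P.part x = U.1 :=
        fun x h => congrArg Subtype.val (ι.injective (h.trans hU.symm))
      have hcq : ∀ y : V, ι ⟨P.part y, P.part_mem.2 (Finset.mem_univ y)⟩ = q → P.part y = W.1 :=
        fun y h => congrArg Subtype.val (ι.injective (h.trans hW.symm))
      by_cases hUW : U.1 = W.1
      · refine Or.inr fun x y hx hy hAdj => ?_
        obtain ⟨hne, A, hA, B, hB, hxA, hyB, hAB, -, -⟩ := hAdj
        exact hAB (by rw [← P.part_eq_of_mem hA hxA, ← P.part_eq_of_mem hB hyB,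
          hcp x hx, hcq y hy, hUW])
      · by_cases hcond : G.IsUniform (ε'/8) U.1 W.1 ∧ ε'/4 ≤ (G.edgeDensity U.1 W.1 : ℝ)
        · refine Or.inl fun x y hxy hx hy => ?_
          refine ⟨hxy, U.1, U.2, W.1, W.2, ?_, ?_, hUW, hcond.1, hcond.2⟩
          · rw [← hcp x hx]; exact P.mem_part_self.2 (Finset.mem_univ x)
          · rw [← hcq y hy]; exact P.mem_part_self.2 (Finset.mem_univ y)
        · refine Or.inr fun x y hx hy hAdj => ?_
          obtain ⟨hne, A, hA, B, hB, hxA, hyB, hAB, hu, hd⟩ := hAdj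
          have hA' : A = U.1 := by rw [← P.part_eq_of_mem hA hxA, hcp x hx]
          have hB' : B = W.1 := by rw [← P.part_eq_of_mem hB hyB, hcq y hy]
          exact hcond ⟨hA' ▸ hB' ▸ hu, hA' ▸ hB' ▸ hd⟩
  · -- small case: plain removal lemma + singleton parts
    obtain ⟨G'', hG''le, hdec, hcard', hfree⟩ := G.triangle_removal hclique
    refine ⟨G'', ?_, ?_, ?_⟩
    · intro x y z ⟨h1, h2, h3⟩
      exact hfree {x, y, z} (is3Clique_triple_iff.2 ⟨h1, h3.symm, h2⟩)
    · have h2 := StrongRemovalAux.natCard_sdiff_le G G'' G'' le_rfl hG''le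
      have hε2 : ε' * (card V:ℝ)^2 ≤ ε * (card V:ℝ)^2 := by gcongr
      push_cast at hcard'
      linarith
    · have hVM : card V ≤ M := le_trans hl'.le (le_max_left _ _)
      refine ⟨fun v => Fin.castLE hVM ((Fintype.equivFin V) v), ?_⟩
      have hcinj : Function.Injective fun v => Fin.castLE hVM ((Fintype.equivFin V) v) :=
        fun a b hab => (Fintype.equivFin V).injective (Fin.castLE_injective _ hab)
      intro p q
      by_cases hpq : ∃ x y, x ≠ y ∧ (Fin.castLE hVM ((Fintype.equivFin V) x)) = p ∧
          (Fin.castLE hVM ((Fintype.equivFin V) y)) = q ∧ G''.Adj x y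
      · obtain ⟨x, y, hxy, hx, hy, hAdj⟩ := hpq
        refine Or.inl fun x' y' hxy' hx' hy' => ?_
        rwa [hcinj (hx'.trans hx.symm), hcinj (hy'.trans hy.symm)]
      · refine Or.inr fun x y hx hy hAdj => hpq ⟨x, y, hAdj.ne, hx, hy, hAdj⟩
end

section
/- Let (Ω, B_max, P) be a probability space and B_reg ⊆ B_max a Boolean algebra. Let (B_i)_{i ∈ I} be a finite tuple of sub-σ-algebras of B_max, and let B be a regularisable sub-σ-algebra of B_max. Then the tuple (B_i)_{i ∈ I} together with one copy of B obeys the uniform intersection property if and only if the tuple (B_i)_{i ∈ I} together with two copies of B obeys the uniform intersection property. -/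
open MeasureTheory MeasurableSpace
open scoped ENNReal

variable {Ω : Type*}

/-- A tuple `(B_i)_{i ∈ ι}` of sub-σ-algebras has the **uniform intersection property** (UIP)
w.r.t. `P` and the regular algebra `Breg` if: for every tuple of events `E_i ∈ B_i` with
`P(⋀_i E_i) = 0` and every `ε > 0`, there are events `F_i ∈ B_i ∩ Breg` with
`P(E_i \ F_i) ≤ ε` for each `i` and `⋀_i F_i = ∅`. -/
def UIP (m0 : MeasurableSpace Ω) (P : Measure Ω) (Breg : Set (Set Ω))
    {ι : Type*} (B : ι → MeasurableSpace Ω) : Prop :=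
  ∀ E : ι → Set Ω, (∀ i, MeasurableSet[B i] (E i)) → P (⋂ i, E i) = 0 →
    ∀ ε : ℝ, 0 < ε → ∃ F : ι → Set Ω,
      (∀ i, MeasurableSet[B i] (F i) ∧ F i ∈ Breg) ∧
      (∀ i, P (E i \ F i) ≤ ENNReal.ofReal ε) ∧
      (⋂ i, F i) = ∅

open scoped symmDiff

/-- Approximation of sets in a regularisably generated σ-algebra by regular events. -/
lemma uip_approx [m0 : MeasurableSpace Ω] (P : Measure Ω) [IsFiniteMeasure P]
    (Breg : Set (Set Ω)) (hBalg : IsSetAlgebra Breg) (hBsub : ∀ s ∈ Breg, MeasurableSet s)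
    {S : Set (Set Ω)} (hSreg : S ⊆ Breg)
    {E : Set Ω} (hE : MeasurableSet[generateFrom S] E) {δ : ℝ} (hδ : 0 < δ) :
    ∃ G, MeasurableSet[generateFrom S] G ∧ G ∈ Breg ∧ P (E ∆ G) < ENNReal.ofReal δ := by
  have hB : generateFrom S ≤ m0 := generateFrom_le fun s hs => hBsub s (hSreg hs)
  have halg : IsSetAlgebra (generateSetAlgebra S) := isSetAlgebra_generateSetAlgebra
  have hdense : Measure.MeasureDense (X := Ω) (m := generateFrom S) (P.trim hB)
      (generateSetAlgebra S) :=
    Measure.MeasureDense.of_generateFrom_isSetAlgebra_finite (m := generateFrom S)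
      (μ := P.trim hB) halg generateFrom_generateSetAlgebra_eq.symm
  obtain ⟨t, ht, htlt⟩ := Measure.MeasureDense.approx (m := generateFrom S) hdense E hE
    (@measure_ne_top Ω (generateFrom S) (P.trim hB) (isFiniteMeasure_trim hB) E) δ hδ
  have htm : MeasurableSet[generateFrom S] t :=
    generateFrom_generateSetAlgebra_eq ▸ measurableSet_generateFrom ht
  refine ⟨t, htm, IsSetAlgebra.generateSetAlgebra_subset hSreg hBalg ht, ?_⟩
  rwa [trim_measurableSet_eq hB (hE.symmDiff htm)] at htlt


/-- **Repetition lemma for the UIP.**  If `B` is a regularisable sub-σ-algebra, then the tuple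
`(B_i)_{i ∈ I}` together with one copy of `B` obeys the UIP if and only if `(B_i)_{i ∈ I}`
together with two copies of `B` obeys the UIP. -/
theorem uip_repeat [m0 : MeasurableSpace Ω] (P : Measure Ω) [IsProbabilityMeasure P]
    (Breg : Set (Set Ω)) (hBalg : IsSetAlgebra Breg) (hBsub : ∀ s ∈ Breg, MeasurableSet s)
    {I : Type*} [Finite I] (BB : I → MeasurableSpace Ω) (hBB : ∀ i, BB i ≤ m0)
    (B : MeasurableSpace Ω)
    (hregB : ∃ S : Set (Set Ω), S.Countable ∧ S ⊆ Breg ∧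
      B = MeasurableSpace.generateFrom S) :
    UIP m0 P Breg (fun i : Option I => i.elim B BB) ↔
      UIP m0 P Breg (Sum.elim BB (fun _ : Bool => B)) := by

  obtain ⟨S, -, hSreg, hBS⟩ := hregB
  constructor
  · -- one copy implies two copies
    intro hU E hE hnull ε hε
    set E₁ := E (Sum.inr true) with hE₁def
    set E₂ := E (Sum.inr false) with hE₂def
    -- the one-copy tuple of events
    set E' : Option I → Set Ω :=
      fun o => Option.elim o (E₁ ∩ E₂) (fun i => E (Sum.inl i)) with hE'def
    have hE'meas : ∀ o : Option I, MeasurableSet[Option.elim o B BB] (E' o) := by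
      rintro (_ | i)
      · exact MeasurableSet.inter (hE (Sum.inr true)) (hE (Sum.inr false))
      · exact hE (Sum.inl i)
    have hset : (⋂ o, E' o) = ⋂ s, E s := by
      ext x
      simp only [Set.mem_iInter]
      constructor
      · intro h s
        rcases s with i | b
        · exact h (some i)
        · rcases b with _ | _
          · exact (h none).2
          · exact (h none).1
      · intro h o
        rcases o with _ | i
        · exact ⟨h (Sum.inr true), h (Sum.inr false)⟩
        · exact h (Sum.inl i)
    have hnull' : P (⋂ o, E' o) = 0 := by rw [hset]; exact hnull
    obtain ⟨F', hF'mem, hF'le, hF'empty⟩ := hU E' hE'meas hnull' (ε / 2) (by linarith)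
    -- regular approximations of E₁ and E₂
    have hE₁m : MeasurableSet[generateFrom S] E₁ := hBS ▸ hE (Sum.inr true)
    have hE₂m : MeasurableSet[generateFrom S] E₂ := hBS ▸ hE (Sum.inr false)
    obtain ⟨G₁, hG₁m, hG₁reg, hG₁lt⟩ :=
      uip_approx (m0 := m0) P Breg hBalg hBsub hSreg hE₁m (δ := ε / 4) (by linarith)
    obtain ⟨G₂, hG₂m, hG₂reg, hG₂lt⟩ :=
      uip_approx (m0 := m0) P Breg hBalg hBsub hSreg hE₂m (δ := ε / 4) (by linarith)
    have hFnB : MeasurableSet[generateFrom S] (F' none) := hBS ▸ (hF'mem none).1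
    have hFnreg : F' none ∈ Breg := (hF'mem none).2
    refine ⟨fun s => match s with
      | Sum.inl i => F' (some i)
      | Sum.inr true => G₁
      | Sum.inr false => (G₂ ∩ F' none) ∪ (G₂ \ G₁), ?_, ?_, ?_⟩
    · rintro (i | b)
      · exact hF'mem (some i)
      · rcases b with _ | _
        · exact ⟨hBS ▸ ((hG₂m.inter hFnB).union (hG₂m.diff hG₁m)),
            hBalg.union_mem (hBalg.inter_mem hG₂reg hFnreg) (hBalg.diff_mem hG₂reg hG₁reg)⟩
        · exact ⟨hBS ▸ hG₁m, hG₁reg⟩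
    · rintro (i | b)
      · exact le_trans (hF'le (some i)) (ENNReal.ofReal_le_ofReal (by linarith))
      · rcases b with _ | _
        · -- the tricky copy
          have hsub : E₂ \ ((G₂ ∩ F' none) ∪ (G₂ \ G₁)) ⊆
              (E₂ ∆ G₂) ∪ ((E₁ ∆ G₁) ∪ ((E₁ ∩ E₂) \ F' none)) := by
            rintro x ⟨hxE2, hxF⟩
            by_cases hG2 : x ∈ G₂
            · have hG1 : x ∈ G₁ := by
                by_contra h; exact hxF (Or.inr ⟨hG2, h⟩)
              have hFn : x ∉ F' none := fun h => hxF (Or.inl ⟨hG2, h⟩)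
              by_cases hE1 : x ∈ E₁
              · exact Or.inr (Or.inr ⟨⟨hE1, hxE2⟩, hFn⟩)
              · exact Or.inr (Or.inl (Set.mem_symmDiff.2 (Or.inr ⟨hG1, hE1⟩)))
            · exact Or.inl (Set.mem_symmDiff.2 (Or.inl ⟨hxE2, hG2⟩))
          have hnone : P ((E₁ ∩ E₂) \ F' none) ≤ ENNReal.ofReal (ε / 2) := hF'le none
          calc P (E₂ \ ((G₂ ∩ F' none) ∪ (G₂ \ G₁)))
              ≤ P ((E₂ ∆ G₂) ∪ ((E₁ ∆ G₁) ∪ ((E₁ ∩ E₂) \ F' none))) := measure_mono hsub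
            _ ≤ P (E₂ ∆ G₂) + P ((E₁ ∆ G₁) ∪ ((E₁ ∩ E₂) \ F' none)) := measure_union_le _ _
            _ ≤ P (E₂ ∆ G₂) + (P (E₁ ∆ G₁) + P ((E₁ ∩ E₂) \ F' none)) :=
                add_le_add le_rfl (measure_union_le _ _)
            _ ≤ ENNReal.ofReal (ε / 4) + (ENNReal.ofReal (ε / 4) + ENNReal.ofReal (ε / 2)) :=
                add_le_add hG₂lt.le (add_le_add hG₁lt.le hnone)
            _ = ENNReal.ofReal ε := by
                rw [← ENNReal.ofReal_add (by linarith) (by linarith),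
                  ← ENNReal.ofReal_add (by linarith) (by linarith)]
                congr 1
                ring
        · have : E₁ \ G₁ ⊆ E₁ ∆ G₁ := fun x hx => Set.mem_symmDiff.2 (Or.inl ⟨hx.1, hx.2⟩)
          exact le_trans (measure_mono this)
            (le_trans hG₁lt.le (ENNReal.ofReal_le_ofReal (by linarith)))
    · rw [Set.eq_empty_iff_forall_notMem]
      intro x hx
      rw [Set.mem_iInter] at hx
      have hG1 : x ∈ G₁ := hx (Sum.inr true)
      have hFn : x ∈ F' none := by
        rcases (hx (Sum.inr false) : x ∈ (G₂ ∩ F' none) ∪ (G₂ \ G₁)) with h | h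
        · exact h.2
        · exact absurd hG1 h.2
      have hmem : x ∈ ⋂ o, F' o := Set.mem_iInter.2 fun o => by
        rcases o with _ | i
        · exact hFn
        · exact hx (Sum.inl i)
      rw [hF'empty] at hmem
      exact hmem
  · -- two copies imply one copy
    intro hU E hE hnull ε hε
    set E'' : I ⊕ Bool → Set Ω :=
      Sum.elim (fun i => E (some i)) (fun _ => E none) with hE''def
    have hE''meas : ∀ s, MeasurableSet[Sum.elim BB (fun _ : Bool => B) s] (E'' s) := by
      rintro (i | b)
      · exact hE (some i)
      · exact hE none
    have hset : (⋂ s, E'' s) = ⋂ o, E o := by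
      ext x
      simp only [Set.mem_iInter]
      constructor
      · intro h o
        rcases o with _ | i
        · exact h (Sum.inr true)
        · exact h (Sum.inl i)
      · intro h s
        rcases s with i | b
        · exact h (some i)
        · exact h none
    have hnull'' : P (⋂ s, E'' s) = 0 := by rw [hset]; exact hnull
    obtain ⟨F'', hF''mem, hF''le, hF''empty⟩ := hU E'' hE''meas hnull'' (ε / 2) (by linarith)
    refine ⟨fun o => Option.elim o (F'' (Sum.inr true) ∩ F'' (Sum.inr false))
      (fun i => F'' (Sum.inl i)), ?_, ?_, ?_⟩
    · rintro (_ | i)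
      · exact ⟨MeasurableSet.inter (hF''mem (Sum.inr true)).1 (hF''mem (Sum.inr false)).1,
          hBalg.inter_mem (hF''mem (Sum.inr true)).2 (hF''mem (Sum.inr false)).2⟩
      · exact hF''mem (Sum.inl i)
    · rintro (_ | i)
      · have hsub : E none \ (F'' (Sum.inr true) ∩ F'' (Sum.inr false)) ⊆
            (E none \ F'' (Sum.inr true)) ∪ (E none \ F'' (Sum.inr false)) := by
          rintro x ⟨hxE, hxF⟩
          by_cases h : x ∈ F'' (Sum.inr true)
          · exact Or.inr ⟨hxE, fun h' => hxF ⟨h, h'⟩⟩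
          · exact Or.inl ⟨hxE, h⟩
        calc P (E none \ (F'' (Sum.inr true) ∩ F'' (Sum.inr false)))
            ≤ P ((E none \ F'' (Sum.inr true)) ∪ (E none \ F'' (Sum.inr false))) :=
              measure_mono hsub
          _ ≤ P (E none \ F'' (Sum.inr true)) + P (E none \ F'' (Sum.inr false)) :=
              measure_union_le _ _
          _ ≤ ENNReal.ofReal (ε / 2) + ENNReal.ofReal (ε / 2) :=
              add_le_add (hF''le (Sum.inr true)) (hF''le (Sum.inr false))
          _ = ENNReal.ofReal ε := by
              rw [← ENNReal.ofReal_add (by linarith) (by linarith)]; norm_num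
      · exact le_trans (hF''le (Sum.inl i)) (ENNReal.ofReal_le_ofReal (by linarith))
    · rw [Set.eq_empty_iff_forall_notMem]
      intro x hx
      rw [Set.mem_iInter] at hx
      have hmem : x ∈ ⋂ s, F'' s := Set.mem_iInter.2 fun s => by
        rcases s with i | b
        · exact hx (some i)
        · rcases b with _ | _
          · exact (hx none).2
          · exact (hx none).1
      rw [hF''empty] at hmem
      exact hmem
end
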